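/- arXiv:1810.12979 — 7 statements merged into one kernel-verified Lean document; each statement's English description precedes it below -/
import Mathlib

section
/- Let a, b be distinct points of ℝ³, L = ‖b − a‖, τ = (b − a)/L, and let G(x) = ln( (‖x − b‖ + L + τ·(a − x)) / (‖x − a‖ + τ·(a − x)) ). Then for every x ∈ ℝ³ not on the straight line through a and b, G is differentiable at x with gradient ∇G(x) = ( (x − b)/‖x − b‖ − τ ) / ( L + ‖x − b‖ + τ·(a − x) ) − ( (x − a)/‖x − a‖ − τ ) / ( ‖x − a‖ + τ·(a − x) ). -/
open scoped RealInnerProductSpace Topology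
open InnerProductSpace Filter

/-!
Writing `τ` for the unit tangent, the numerator and denominator of the quotient defining `G` are
`φ_b` and `φ_a`, where `φ_c y = ‖y - c‖ - ⟪τ, y - c⟫`. By Cauchy–Schwarz `φ_c y > 0` unless
`y - c` is a nonnegative multiple of `τ`, so off the line through `a` and `b` both are positive,
`G = log φ_b - log φ_a` near `x`, and the gradient follows from `∇ φ_c y = (y - c)/‖y - c‖ - τ`.
-/

variable {F : Type*} [NormedAddCommGroup F] [InnerProductSpace ℝ F]

section GradientCalculus

variable [CompleteSpace F] {f g : F → ℝ} {f' g' x : F}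

theorem HasGradientAt.sub (hf : HasGradientAt f f' x) (hg : HasGradientAt g g' x) :
    HasGradientAt (fun y => f y - g y) (f' - g') x := by
  rw [hasGradientAt_iff_hasFDerivAt, map_sub]
  exact hf.hasFDerivAt.sub hg.hasFDerivAt

theorem HasGradientAt.log (hf : HasGradientAt f f' x) (hx : f x ≠ 0) :
    HasGradientAt (fun y => Real.log (f y)) ((f x)⁻¹ • f') x := by
  rw [hasGradientAt_iff_hasFDerivAt]
  simpa using hf.hasFDerivAt.log hx

theorem hasGradientAt_norm_sub {c : F} (hx : x ≠ c) :
    HasGradientAt (fun y => ‖y - c‖) (‖x - c‖⁻¹ • (x - c)) x := by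
  have hc : ‖x - c‖ ≠ 0 := norm_ne_zero_iff.mpr (sub_ne_zero.mpr hx)
  have hsq : HasFDerivAt (fun y => ‖y - c‖ ^ 2) (2 • innerSL ℝ (x - c)) x := by
    simpa using ((hasFDerivAt_id x).sub_const c).norm_sq
  have hsqrt := hsq.sqrt (pow_ne_zero 2 hc)
  simp only [Real.sqrt_sq (norm_nonneg _)] at hsqrt
  rw [hasGradientAt_iff_hasFDerivAt]
  refine hsqrt.congr_fderiv ?_
  ext v
  simp only [smul_apply, coe_innerSL_apply, nsmul_eq_mul, Nat.cast_ofNat, smul_eq_mul, map_smul,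
    toDual_apply_apply]
  field_simp

theorem hasGradientAt_inner_sub (τ c : F) : HasGradientAt (fun y => ⟪τ, y - c⟫) τ x := by
  rw [hasGradientAt_iff_hasFDerivAt]
  exact (innerSL ℝ τ).hasFDerivAt.comp x ((hasFDerivAt_id x).sub_const c)

end GradientCalculus

theorem real_inner_lt_norm_of_forall_ne_smul {u v : F} (hu : ‖u‖ = 1)
    (hv : ∀ t : ℝ, v ≠ t • u) : ⟪u, v⟫ < ‖v‖ := by
  refine lt_of_le_of_ne (by simpa [hu] using real_inner_le_norm u v) fun h => ?_
  have h' : ⟪u, v⟫ = ‖u‖ * ‖v‖ := by rw [hu, one_mul, h]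
  rw [inner_eq_norm_mul_iff_real, hu, one_smul] at h'
  exact hv ‖v‖ h'.symm

section NormSubInner

variable {τ c x : F}

theorem hasGradientAt_log_norm_sub_sub_inner [CompleteSpace F] (hτ : ‖τ‖ = 1)
    (hx : ∀ t : ℝ, x - c ≠ t • τ) :
    HasGradientAt (fun y => Real.log (‖y - c‖ - ⟪τ, y - c⟫))
      ((‖x - c‖ - ⟪τ, x - c⟫)⁻¹ • (‖x - c‖⁻¹ • (x - c) - τ)) x := by
  have hxc : x ≠ c := sub_ne_zero.mp (by simpa using hx 0)
  exact ((hasGradientAt_norm_sub hxc).sub (hasGradientAt_inner_sub τ c)).log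
    (sub_pos.mpr (real_inner_lt_norm_of_forall_ne_smul hτ hx)).ne'

theorem eventually_inner_sub_lt_norm_sub (hτ : ‖τ‖ = 1) (hx : ∀ t : ℝ, x - c ≠ t • τ) :
    ∀ᶠ y in 𝓝 x, ⟪τ, y - c⟫ < ‖y - c‖ := by
  have hcont : Continuous fun y => ‖y - c‖ - ⟪τ, y - c⟫ := by fun_prop
  filter_upwards [(hcont.tendsto x).eventually
    (eventually_gt_nhds (sub_pos.mpr (real_inner_lt_norm_of_forall_ne_smul hτ hx)))] with y hy
  exact sub_pos.mp hy

end NormSubInner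

theorem sub_ne_smul_of_forall_ne_add_smul {a b c x : F} {s : ℝ} (hc : c = a + s • (b - a))
    (hx : ∀ t : ℝ, x ≠ a + t • (b - a)) (r t : ℝ) : x - c ≠ t • r • (b - a) := by
  intro h
  apply hx (s + t * r)
  rw [← sub_add_cancel x c, h, hc, add_smul, mul_smul]
  abel

/-- **Gradient of the Newtonian potential of a segment.**
For distinct `a b : ℝ³`, `L = ‖b - a‖`, `τ = (b - a)/L` and
`G(x) = ln((‖x - b‖ + L + ⟪τ, a - x⟫) / (‖x - a‖ + ⟪τ, a - x⟫))`, the function `G`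
has, at every `x` not on the straight line through `a` and `b`, the gradient
`((x - b)/‖x - b‖ - τ)/(L + ‖x - b‖ + ⟪τ, a - x⟫)
  - ((x - a)/‖x - a‖ - τ)/(‖x - a‖ + ⟪τ, a - x⟫)`. -/
theorem segment_potential_gradient
    (a b : EuclideanSpace ℝ (Fin 3)) (hab : a ≠ b)
    (L : ℝ) (hL : L = ‖b - a‖)
    (τ : EuclideanSpace ℝ (Fin 3)) (hτ : τ = L⁻¹ • (b - a))
    (G : EuclideanSpace ℝ (Fin 3) → ℝ)
    (hG : ∀ y, G y = Real.log ((‖y - b‖ + L + ⟪τ, a - y⟫) / (‖y - a‖ + ⟪τ, a - y⟫)))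
    (x : EuclideanSpace ℝ (Fin 3))
    (hx : ∀ t : ℝ, x ≠ a + t • (b - a)) :
    HasGradientAt G
      ((L + ‖x - b‖ + ⟪τ, a - x⟫)⁻¹ • (‖x - b‖⁻¹ • (x - b) - τ) -
        (‖x - a‖ + ⟪τ, a - x⟫)⁻¹ • (‖x - a‖⁻¹ • (x - a) - τ)) x := by
  have hba : b - a ≠ 0 := sub_ne_zero.mpr hab.symm
  have hτ1 : ‖τ‖ = 1 := by rw [hτ, hL]; exact norm_smul_inv_norm hba
  have hτL : ⟪τ, b - a⟫ = L := by
    rw [hτ, real_inner_smul_left, real_inner_self_eq_norm_sq, hL]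
    field_simp [norm_ne_zero_iff.mpr hba]
  have hnum : ∀ y, ‖y - b‖ + L + ⟪τ, a - y⟫ = ‖y - b‖ - ⟪τ, y - b⟫ := fun y => by
    rw [← hτL, add_assoc, ← inner_add_right, show b - a + (a - y) = -(y - b) by abel,
      inner_neg_right, ← sub_eq_add_neg]
  have hden : ∀ y, ‖y - a‖ + ⟪τ, a - y⟫ = ‖y - a‖ - ⟪τ, y - a⟫ := fun y => by
    rw [sub_eq_add_neg _ ⟪τ, _⟫, ← inner_neg_right, neg_sub]
  have hxa := sub_ne_smul_of_forall_ne_add_smul (c := a) (s := 0) (by simp) hx L⁻¹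
  have hxb := sub_ne_smul_of_forall_ne_add_smul (c := b) (s := 1) (by simp) hx L⁻¹
  rw [← hτ] at hxa hxb
  rw [add_comm L, hnum, hden]
  refine ((hasGradientAt_log_norm_sub_sub_inner hτ1 hxb).sub
    (hasGradientAt_log_norm_sub_sub_inner hτ1 hxa)).congr_of_eventuallyEq ?_
  filter_upwards [eventually_inner_sub_lt_norm_sub hτ1 hxb,
    eventually_inner_sub_lt_norm_sub hτ1 hxa] with y hyb hya
  rw [hG, hnum, hden, Real.log_div (sub_pos.mpr hyb).ne' (sub_pos.mpr hya).ne']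
end

section
/- Let a, b be distinct points of ℝ³, L = ‖b − a‖, τ = (b − a)/L, and let G(x) = ln( (‖x − b‖ + L + τ·(a − x)) / (‖x − a‖ + τ·(a − x)) ). Then G is harmonic on the open set ℝ³ minus the straight line through a and b; that is, G is twice continuously differentiable there and its Laplacian ΔG (the sum of its three second partial derivatives) vanishes at every point not on the line through a and b. -/
open scoped RealInnerProductSpace

/-- The Laplacian of `f : ℝ³ → ℝ` at `x`: the sum of the three second partial
derivatives of `f` with respect to the standard orthonormal coordinates. -/
noncomputable def laplacian (f : EuclideanSpace ℝ (Fin 3) → ℝ)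
    (x : EuclideanSpace ℝ (Fin 3)) : ℝ :=
  ∑ i : Fin 3,
    fderiv ℝ (fun y => fderiv ℝ f y (EuclideanSpace.single i 1)) x
      (EuclideanSpace.single i 1)


noncomputable section SegAux

abbrev E3 := EuclideanSpace ℝ (Fin 3)

/-- unit coordinate vectors -/
abbrev ee (i : Fin 3) : E3 := EuclideanSpace.single i 1

lemma seg_hasFDerivAt_norm_sub (p x : E3) (hx : x ≠ p) :
    HasFDerivAt (fun y : E3 => ‖y - p‖)
      ((‖x - p‖)⁻¹ • (innerSL ℝ (x - p))) x := by
  have hv : x - p ≠ 0 := sub_ne_zero.2 hx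
  have h1 : HasFDerivAt (fun y : E3 => y - p) (ContinuousLinearMap.id ℝ E3) x :=
    (hasFDerivAt_id x).sub_const p
  have h2 := (h1.inner ℝ h1 : HasFDerivAt (fun y : E3 => ⟪y - p, y - p⟫) _ x)
  have hs : ⟪x - p, x - p⟫ ≠ 0 := by
    rw [real_inner_self_eq_norm_mul_norm]
    exact mul_ne_zero (norm_ne_zero_iff.2 hv) (norm_ne_zero_iff.2 hv)
  have h3 := (Real.hasDerivAt_sqrt hs).comp_hasFDerivAt x h2
  have heq : ((fun s => Real.sqrt s) ∘ fun y : E3 => ⟪y - p, y - p⟫)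
      = fun y : E3 => ‖y - p‖ := by
    funext y
    simp only [Function.comp_apply, real_inner_self_eq_norm_mul_norm,
      Real.sqrt_mul_self (norm_nonneg _)]
  rw [heq] at h3
  refine h3.congr_fderiv ?_
  ext v
  have hxx : Real.sqrt ⟪x - p, x - p⟫ = ‖x - p‖ := by
    rw [real_inner_self_eq_norm_mul_norm, Real.sqrt_mul_self (norm_nonneg _)]
  have hn : ‖x - p‖ ≠ 0 := norm_ne_zero_iff.2 hv
  simp only [ContinuousLinearMap.smul_apply, innerSL_apply_apply,
    ContinuousLinearMap.coe_comp', Function.comp_apply,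
    ContinuousLinearMap.prod_apply, ContinuousLinearMap.coe_id', id_eq,
    fderivInnerCLM_apply, hxx]
  rw [real_inner_comm v (x - p)]
  field_simp
  ring

/-- the function whose log we take -/
def sphi (p w : E3) (y : E3) : ℝ := ‖y - p‖ + ⟪w, y - p⟫

def sU (p w : E3) : Set E3 := {y | y ≠ p ∧ 0 < sphi p w y}

lemma sU_open (p w : E3) : IsOpen (sU p w) := by
  have h1 : IsOpen {y : E3 | y ≠ p} := isOpen_ne
  have h2 : IsOpen {y : E3 | 0 < sphi p w y} := by
    have hc : Continuous (sphi p w) := by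
      unfold sphi
      exact ((continuous_id.sub continuous_const).norm).add
        ((continuous_const.inner (continuous_id.sub continuous_const)))
    exact isOpen_lt continuous_const hc
  exact h1.inter h2

def sdphi (p w x : E3) : E3 →L[ℝ] ℝ :=
  (‖x - p‖)⁻¹ • (innerSL ℝ (x - p)) + innerSL ℝ w

lemma seg_hasFDerivAt_phi (p w : E3) {x : E3} (hx : x ≠ p) :
    HasFDerivAt (sphi p w) (sdphi p w x) x := by
  unfold sphi sdphi
  exact (seg_hasFDerivAt_norm_sub p x hx).add
    ((innerSL ℝ w).hasFDerivAt.comp x ((hasFDerivAt_id x).sub_const p) |>.congr_fderiv (by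
      ext v; simp))

end SegAux
noncomputable section SegAux2

lemma seg_hasFDerivAt_log (p w : E3) {x : E3} (hx : x ≠ p) (hp : 0 < sphi p w x) :
    HasFDerivAt (fun y => Real.log (sphi p w y)) ((sphi p w x)⁻¹ • sdphi p w x) x :=
  (seg_hasFDerivAt_phi p w hx).log (ne_of_gt hp)

/-- directional derivative of log ∘ phi, as an explicit function of y -/
def sg (p w : E3) (i : Fin 3) (y : E3) : ℝ :=
  (sphi p w y)⁻¹ * ((‖y - p‖)⁻¹ * ⟪y - p, ee i⟫ + ⟪w, ee i⟫)

lemma sg_eq_fderiv (p w : E3) (i : Fin 3) {y : E3} (hy : y ≠ p) (hp : 0 < sphi p w y) :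
    fderiv ℝ (fun z => Real.log (sphi p w z)) y (ee i) = sg p w i y := by
  rw [(seg_hasFDerivAt_log p w hy hp).fderiv]
  simp [sg, sdphi]
  rw [inner_sub_left]
  ring

end SegAux2
noncomputable section SegAux3

lemma sum_coord_mul (u v : E3) : ∑ i, u i * v i = ⟪u, v⟫ := by
  rw [PiLp.inner_apply]
  simp [RCLike.inner_apply, mul_comm]

lemma sg_deriv (p w : E3) {x : E3} (hx : x ≠ p) (hp : 0 < sphi p w x) (i : Fin 3) :
    DifferentiableAt ℝ (sg p w i) x ∧
    fderiv ℝ (sg p w i) x (ee i) =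
      (sphi p w x)⁻¹ * ((‖x - p‖)⁻¹ - (‖x - p‖)⁻¹ ^ 3 * ((x - p) i) ^ 2)
      - ((sphi p w x)⁻¹) ^ 2 * ((‖x - p‖)⁻¹ * ((x - p) i) + w i) ^ 2 := by
  have hv : x - p ≠ 0 := sub_ne_zero.2 hx
  have hr : ‖x - p‖ ≠ 0 := norm_ne_zero_iff.2 hv
  have h1 : HasFDerivAt (fun y : E3 => y - p) (ContinuousLinearMap.id ℝ E3) x :=
    (hasFDerivAt_id x).sub_const p
  have hA : HasFDerivAt (fun y : E3 => ⟪y - p, ee i⟫) (innerSL ℝ (ee i)) x := by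
    refine ((innerSL ℝ (ee i)).hasFDerivAt.comp x h1).congr_fderiv ?_ |>.congr_of_eventuallyEq ?_
    · ext v; simp
    · filter_upwards with y using by simp [real_inner_comm]
  have hB : HasFDerivAt (fun y : E3 => (‖y - p‖)⁻¹)
      ((-(‖x - p‖ ^ 2)⁻¹) • ((‖x - p‖)⁻¹ • (innerSL ℝ (x - p)))) x :=
    (hasDerivAt_inv hr).comp_hasFDerivAt x (seg_hasFDerivAt_norm_sub p x hx)
  have hN := (hB.mul hA).add_const ⟪w, ee i⟫
  have hphiinv : HasFDerivAt (fun y => (sphi p w y)⁻¹)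
      ((-(sphi p w x ^ 2)⁻¹) • sdphi p w x) x :=
    (hasDerivAt_inv (ne_of_gt hp)).comp_hasFDerivAt x (seg_hasFDerivAt_phi p w hx)
  have hg : HasFDerivAt (sg p w i) _ x := hphiinv.mul hN
  refine ⟨hg.differentiableAt, ?_⟩
  rw [hg.fderiv]
  have e1 : ⟪x - p, ee i⟫ = (x - p) i := by
    simp [EuclideanSpace.inner_single_right]
  have e2 : ⟪w, ee i⟫ = w i := by
    simp [EuclideanSpace.inner_single_right]
  have e3 : ⟪ee i, ee i⟫ = (1 : ℝ) := by
    simp [EuclideanSpace.inner_single_right, EuclideanSpace.single_apply]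
  simp only [ContinuousLinearMap.add_apply, ContinuousLinearMap.smul_apply,
    innerSL_apply_apply, smul_eq_mul, sdphi, e1, e2, e3]
  field_simp
  ring

lemma sum_sg (p w : E3) (hw : ‖w‖ = 1) {x : E3} (hx : x ≠ p) (hp : 0 < sphi p w x) :
    ∑ i, fderiv ℝ (sg p w i) x (ee i) = 0 := by
  have hv : x - p ≠ 0 := sub_ne_zero.2 hx
  have hr : ‖x - p‖ ≠ 0 := norm_ne_zero_iff.2 hv
  set r := ‖x - p‖ with hrdef
  set φ := sphi p w x with hφdef
  have hφ : φ ≠ 0 := ne_of_gt hp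
  have hsum : ∑ i, fderiv ℝ (sg p w i) x (ee i)
      = ∑ i, ((-(φ⁻¹ * r⁻¹ ^ 3) - φ⁻¹ ^ 2 * r⁻¹ ^ 2) * ((x - p) i * (x - p) i)
          + (-(2 * φ⁻¹ ^ 2 * r⁻¹)) * ((x - p) i * w i)
          + (-(φ⁻¹ ^ 2)) * (w i * w i)
          + φ⁻¹ * r⁻¹) := by
    refine Finset.sum_congr rfl fun i _ => ?_
    rw [(sg_deriv p w hx hp i).2]
    ring
  rw [hsum]
  simp only [Finset.sum_add_distrib, ← Finset.mul_sum, Finset.sum_const,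
    Finset.card_univ, Fintype.card_fin, nsmul_eq_mul]
  rw [sum_coord_mul (x - p) (x - p), sum_coord_mul (x - p) w, sum_coord_mul w w]
  have h2 : ⟪x - p, x - p⟫ = r ^ 2 := by
    rw [real_inner_self_eq_norm_mul_norm]; ring
  have h3 : ⟪w, w⟫ = 1 := by
    rw [real_inner_self_eq_norm_mul_norm, hw]; ring
  have h4 : φ = r + ⟪x - p, w⟫ := by
    rw [hφdef, hrdef]
    unfold sphi
    rw [real_inner_comm]
  rw [h2, h3]
  set c := (⟪x - p, w⟫ : ℝ) with hcdef
  rw [h4] at hφ ⊢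
  field_simp
  ring

end SegAux3
noncomputable section SegAux4

lemma contDiffAt_log_phi (p w : E3) {x : E3} (hx : x ≠ p) (hp : 0 < sphi p w x) :
    ContDiffAt ℝ 2 (fun y => Real.log (sphi p w y)) x := by
  have hφ : ContDiffAt ℝ 2 (sphi p w) x := by
    have h1 : ContDiffAt ℝ 2 (fun y : E3 => ‖y - p‖) x :=
      ContDiffAt.norm ℝ ((contDiffAt_id.sub contDiffAt_const)) (sub_ne_zero.2 hx)
    have h2 : ContDiffAt ℝ 2 (fun y : E3 => ⟪w, y - p⟫) x :=
      ContDiffAt.inner ℝ contDiffAt_const (contDiffAt_id.sub contDiffAt_const)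
    exact h1.add h2
  exact (Real.contDiffAt_log.2 (ne_of_gt hp)).comp x hφ

end SegAux4

/-- **The Newtonian potential of a segment is harmonic off the line.**
For distinct `a b : ℝ³`, `L = ‖b - a‖`, `τ = (b - a)/L` and
`G(x) = ln((‖x - b‖ + L + ⟪τ, a - x⟫) / (‖x - a‖ + ⟪τ, a - x⟫))`, the function `G`
is twice continuously differentiable on the complement of the straight line through
`a` and `b`, and its Laplacian vanishes at every point of that open set. -/
theorem segment_potential_harmonic
    (a b : EuclideanSpace ℝ (Fin 3)) (hab : a ≠ b)
    (L : ℝ) (hL : L = ‖b - a‖)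
    (τ : EuclideanSpace ℝ (Fin 3)) (hτ : τ = L⁻¹ • (b - a))
    (G : EuclideanSpace ℝ (Fin 3) → ℝ)
    (hG : ∀ y, G y = Real.log ((‖y - b‖ + L + ⟪τ, a - y⟫) / (‖y - a‖ + ⟪τ, a - y⟫))) :
    ContDiffOn ℝ 2 G {x | ∀ t : ℝ, x ≠ a + t • (b - a)} ∧
    ∀ x, (∀ t : ℝ, x ≠ a + t • (b - a)) → laplacian G x = 0 := by
  set w : E3 := -τ with hwdef
  have hba : b - a ≠ 0 := sub_ne_zero.2 (Ne.symm hab)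
  have hL0 : 0 < L := by rw [hL]; exact norm_pos_iff.2 hba
  have hτn : ‖τ‖ = 1 := by
    rw [hτ, norm_smul, norm_inv, Real.norm_eq_abs, abs_of_pos hL0, ← hL]
    field_simp
  have hw : ‖w‖ = 1 := by rw [hwdef, norm_neg, hτn]
  have hτba : ⟪τ, b - a⟫ = L := by
    rw [hτ, real_inner_smul_left, real_inner_self_eq_norm_mul_norm, ← hL]
    field_simp
  -- membership of the off-line set into the good sets
  have key : ∀ x : E3, (∀ t : ℝ, x ≠ a + t • (b - a)) → x ∈ sU a w ∧ x ∈ sU b w := by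
    intro x hS
    have hxa : x ≠ a := by
      have := hS 0; simpa using this
    have hxb : x ≠ b := by
      have := hS 1
      intro h; apply this; rw [h]; rw [one_smul]; abel
    have pos_of : ∀ (p : E3), x ≠ p → (x - p ≠ ‖x - p‖ • τ) → 0 < sphi p w x := by
      intro p hxp hne
      have hle : ⟪τ, x - p⟫ ≤ ‖x - p‖ := by
        have := real_inner_le_norm τ (x - p)
        rwa [hτn, one_mul] at this
      have hlt : ⟪τ, x - p⟫ < ‖x - p‖ := by
        rcases lt_or_eq_of_le hle with h | h
        · exact h
        · exfalso
          have heq : ⟪τ, x - p⟫ = ‖τ‖ * ‖x - p‖ := by rw [hτn, one_mul]; exact h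
          have := inner_eq_norm_mul_iff_real.mp heq
          rw [hτn, one_smul] at this
          exact hne this.symm
      have : sphi p w x = ‖x - p‖ - ⟪τ, x - p⟫ := by
        unfold sphi
        rw [hwdef, inner_neg_left]
        ring
      rw [this]
      linarith
    constructor
    · refine ⟨hxa, pos_of a hxa ?_⟩
      intro heq
      have h1 : x - a = (‖x - a‖ * L⁻¹) • (b - a) := by
        calc x - a = ‖x - a‖ • τ := heq
        _ = (‖x - a‖ * L⁻¹) • (b - a) := by rw [hτ, smul_smul]
      exact hS (‖x - a‖ * L⁻¹) (sub_eq_iff_eq_add'.mp h1)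
    · refine ⟨hxb, pos_of b hxb ?_⟩
      intro heq
      have h1 : x - b = (‖x - b‖ * L⁻¹) • (b - a) := by
        calc x - b = ‖x - b‖ • τ := heq
        _ = (‖x - b‖ * L⁻¹) • (b - a) := by rw [hτ, smul_smul]
      have h2 : x = b + (‖x - b‖ * L⁻¹) • (b - a) := sub_eq_iff_eq_add'.mp h1
      have h3 : a + (1 + ‖x - b‖ * L⁻¹) • (b - a) = b + (‖x - b‖ * L⁻¹) • (b - a) := by
        rw [add_smul, one_smul]
        module
      exact hS (1 + ‖x - b‖ * L⁻¹) (by rw [h3]; exact h2)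
  -- G agrees with the difference of logs on the good set
  set f : E3 → ℝ := fun y => Real.log (sphi b w y) - Real.log (sphi a w y) with hfdef
  set V : Set E3 := sU a w ∩ sU b w with hVdef
  have hVopen : IsOpen V := (sU_open a w).inter (sU_open b w)
  have hGf : ∀ y ∈ V, G y = f y := by
    rintro y ⟨⟨hya, hpa⟩, ⟨hyb, hpb⟩⟩
    have hnum : sphi b w y = ‖y - b‖ + L + ⟪τ, a - y⟫ := by
      unfold sphi
      rw [hwdef, inner_neg_left]
      have : (⟪τ, y - b⟫ : ℝ) = ⟪τ, y - a⟫ - ⟪τ, b - a⟫ := by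
        rw [← inner_sub_right]
        congr 1
        abel
      rw [this, hτba]
      have : (⟪τ, a - y⟫ : ℝ) = -⟪τ, y - a⟫ := by
        rw [← inner_neg_right]
        congr 1
        abel
      rw [this]
      ring
    have hden : sphi a w y = ‖y - a‖ + ⟪τ, a - y⟫ := by
      unfold sphi
      rw [hwdef, inner_neg_left]
      have : (⟪τ, a - y⟫ : ℝ) = -⟪τ, y - a⟫ := by
        rw [← inner_neg_right]; congr 1; abel
      rw [this]
    rw [hG y, hfdef, ← hnum, ← hden,
      Real.log_div (ne_of_gt hpb) (ne_of_gt hpa)]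
  constructor
  · intro x hx
    obtain ⟨hxa, hxb⟩ := key x hx
    have hV : V ∈ nhds x := hVopen.mem_nhds ⟨hxa, hxb⟩
    have hf : ContDiffAt ℝ 2 f x :=
      (contDiffAt_log_phi b w hxb.1 hxb.2).sub (contDiffAt_log_phi a w hxa.1 hxa.2)
    have hev : G =ᶠ[nhds x] f := Filter.eventually_of_mem hV hGf
    exact (hf.congr_of_eventuallyEq hev).contDiffWithinAt
  · intro x hx
    obtain ⟨hxa, hxb⟩ := key x hx
    have hV : V ∈ nhds x := hVopen.mem_nhds ⟨hxa, hxb⟩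
    -- fderiv of G equals fderiv of f on V
    have hfd : ∀ y ∈ V, fderiv ℝ G y = fderiv ℝ f y := by
      intro y hy
      exact Filter.EventuallyEq.fderiv_eq
        (Filter.eventually_of_mem (hVopen.mem_nhds hy) hGf)
    have hfd2 : ∀ y ∈ V, ∀ i : Fin 3,
        fderiv ℝ f y (ee i) = sg b w i y - sg a w i y := by
      rintro y ⟨⟨hya, hpa⟩, ⟨hyb, hpb⟩⟩ i
      have hdb := (seg_hasFDerivAt_log b w hyb hpb).differentiableAt
      have hda := (seg_hasFDerivAt_log a w hya hpa).differentiableAt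
      rw [hfdef]
      rw [fderiv_fun_sub hdb hda]
      rw [ContinuousLinearMap.sub_apply]
      rw [sg_eq_fderiv b w i hyb hpb, sg_eq_fderiv a w i hya hpa]
    unfold laplacian
    have hcongr : ∀ i : Fin 3,
        fderiv ℝ (fun y => fderiv ℝ G y (EuclideanSpace.single i 1)) x (EuclideanSpace.single i 1)
        = fderiv ℝ (sg b w i) x (ee i) - fderiv ℝ (sg a w i) x (ee i) := by
      intro i
      have hev : (fun y => fderiv ℝ G y (EuclideanSpace.single i 1))
          =ᶠ[nhds x] (fun y => sg b w i y - sg a w i y) := by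
        filter_upwards [hV] with y hy
        rw [hfd y hy, hfd2 y hy i]
      rw [hev.fderiv_eq]
      rw [fderiv_fun_sub (sg_deriv b w hxb.1 hxb.2 i).1 (sg_deriv a w hxa.1 hxa.2 i).1]
      rw [ContinuousLinearMap.sub_apply]
    rw [Finset.sum_congr rfl fun i _ => hcongr i]
    rw [Finset.sum_sub_distrib]
    rw [sum_sg b w hw hxb.1 hxb.2, sum_sg a w hw hxa.1 hxa.2]
    ring
end

section
/- Let R > 0, Z > 0 and let g : [0, Z] → ℝ be continuous. Let U = { x ∈ ℝ³ : x₁² + x₂² < R², 0 < x₃ < Z } be the open cylinder of radius R and height Z. Then the function x ↦ g(x₃)² / (x₁² + x₂² + x₃²) is integrable on U and ∫_U g(x₃)² / (x₁² + x₂² + x₃²) dx = π ∫₀^Z g(z)² ln( 1 + R²/z² ) dz < ∞. -/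
open MeasureTheory Set Real

section AuxEndpoint

lemma aux_log_integrable (Z : ℝ) (hZ : 0 < Z) :
    MeasureTheory.IntegrableOn Real.log (Set.Ioo 0 Z) := by
  have hrpow : IntegrableOn (fun x : ℝ => x ^ (-(2:ℝ)⁻¹)) (Set.Ioo 0 Z) := by
    have := (intervalIntegral.intervalIntegrable_rpow' (a := 0) (b := Z) (r := -(2:ℝ)⁻¹)
      (by norm_num))
    rw [intervalIntegrable_iff_integrableOn_Ioo_of_le hZ.le] at this
    exact this
  have hφ : IntegrableOn (fun x : ℝ => 2 * x ^ (-(2:ℝ)⁻¹) + |Real.log Z|) (Set.Ioo 0 Z) :=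
    (hrpow.const_mul 2).add (integrableOn_const measure_Ioo_lt_top.ne)
  refine Integrable.mono' hφ Real.measurable_log.aestronglyMeasurable ?_
  filter_upwards [ae_restrict_mem measurableSet_Ioo] with x hx
  rcases hx with ⟨hx0, hxZ⟩
  have h2 : (0:ℝ) ≤ 2 * x ^ (-(2:ℝ)⁻¹) := by positivity
  rcases le_or_gt x 1 with hx1 | hx1
  · have hlog : Real.log x ≤ 0 := Real.log_nonpos hx0.le hx1
    rw [Real.norm_eq_abs, abs_of_nonpos hlog]
    have key : -Real.log x ≤ 2 * x ^ (-(2:ℝ)⁻¹) := by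
      have h1 : Real.log (x ^ (-(2:ℝ)⁻¹)) ≤ x ^ (-(2:ℝ)⁻¹) := by
        nlinarith [Real.exp_log (show (0:ℝ) < x ^ (-(2:ℝ)⁻¹) by positivity),
          Real.log_le_sub_one_of_pos (show (0:ℝ) < x ^ (-(2:ℝ)⁻¹) by positivity)]
      rw [Real.log_rpow hx0] at h1
      nlinarith
    linarith [abs_nonneg (Real.log Z)]
  · have hlog : 0 ≤ Real.log x := Real.log_nonneg hx1.le
    rw [Real.norm_eq_abs, abs_of_nonneg hlog]
    have h3 : Real.log x ≤ Real.log Z := Real.log_le_log hx0 hxZ.le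
    have h4 := le_abs_self (Real.log Z)
    linarith

lemma aux_radial (R z : ℝ) (hR : 0 < R) (hz : 0 < z) :
    ∫ r in (0:ℝ)..R, r / (r ^ 2 + z ^ 2) = Real.log (1 + R ^ 2 / z ^ 2) / 2 := by
  have hderiv : ∀ r ∈ Set.uIcc (0:ℝ) R,
      HasDerivAt (fun r => Real.log (r ^ 2 + z ^ 2) / 2) (r / (r ^ 2 + z ^ 2)) r := by
    intro r _
    have h1 : HasDerivAt (fun r : ℝ => r ^ 2 + z ^ 2) (2 * r) r := by
      simpa using ((hasDerivAt_pow 2 r).add_const (z ^ 2))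
    have hne : r ^ 2 + z ^ 2 ≠ 0 := by positivity
    have h3 := ((Real.hasDerivAt_log hne).comp r h1).div_const 2
    refine h3.congr_deriv ?_
    field_simp
  have hcont : IntervalIntegrable (fun r => r / (r ^ 2 + z ^ 2)) volume 0 R := by
    apply ContinuousOn.intervalIntegrable
    apply ContinuousOn.div continuousOn_id (by fun_prop)
    intro x _; positivity
  rw [intervalIntegral.integral_eq_sub_of_hasDerivAt hderiv hcont]
  rw [show (0:ℝ) ^ 2 + z ^ 2 = z ^ 2 by ring]
  rw [show (1 + R ^ 2 / z ^ 2) = (R ^ 2 + z ^ 2) / z ^ 2 by field_simp; ring]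
  rw [Real.log_div (by positivity) (by positivity)]
  ring

lemma aux_disk_integrable (R z : ℝ) (hR : 0 < R) (hz : 0 < z) :
    MeasureTheory.IntegrableOn (fun p : ℝ × ℝ => (p.1 ^ 2 + p.2 ^ 2 + z ^ 2)⁻¹)
      {p : ℝ × ℝ | p.1 ^ 2 + p.2 ^ 2 < R ^ 2} := by
  have hDmeas : MeasurableSet {p : ℝ × ℝ | p.1 ^ 2 + p.2 ^ 2 < R ^ 2} :=
    (isOpen_lt (by fun_prop) continuous_const).measurableSet
  have hbdd : Bornology.IsBounded {p : ℝ × ℝ | p.1 ^ 2 + p.2 ^ 2 < R ^ 2} := by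
    apply Bornology.IsBounded.subset (Metric.isBounded_ball (x := (0:ℝ×ℝ)) (r := R + 1))
    intro p hp
    simp only [Set.mem_setOf_eq] at hp
    have h1 : |p.1| < R := by
      rw [abs_lt]; constructor <;> nlinarith [sq_nonneg p.2]
    have h2 : |p.2| < R := by
      rw [abs_lt]; constructor <;> nlinarith [sq_nonneg p.1]
    simp only [Metric.mem_ball, dist_zero_right, Prod.norm_def, Real.norm_eq_abs]
    exact max_lt (by linarith) (by linarith)
  refine Integrable.mono' (g := fun _ => (z ^ 2)⁻¹)
    (integrableOn_const hbdd.measure_lt_top.ne) ?_ ?_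
  · exact (Measurable.inv (by fun_prop)).aestronglyMeasurable
  · filter_upwards [ae_restrict_mem hDmeas] with p _
    rw [Real.norm_eq_abs, abs_of_nonneg (by positivity)]
    apply inv_anti₀ (by positivity)
    nlinarith [sq_nonneg p.1, sq_nonneg p.2]

lemma aux_disk_integral (R z : ℝ) (hR : 0 < R) (hz : 0 < z) :
    ∫ p in {p : ℝ × ℝ | p.1 ^ 2 + p.2 ^ 2 < R ^ 2}, (p.1 ^ 2 + p.2 ^ 2 + z ^ 2)⁻¹ =
      Real.pi * Real.log (1 + R ^ 2 / z ^ 2) := by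
  set D : Set (ℝ × ℝ) := {p : ℝ × ℝ | p.1 ^ 2 + p.2 ^ 2 < R ^ 2} with hD
  have hDmeas : MeasurableSet D := (isOpen_lt (by fun_prop) continuous_const).measurableSet
  set f : ℝ × ℝ → ℝ := D.indicator (fun p => (p.1 ^ 2 + p.2 ^ 2 + z ^ 2)⁻¹) with hf
  have h0 : ∫ p in D, (p.1 ^ 2 + p.2 ^ 2 + z ^ 2)⁻¹ = ∫ p, f p := by
    rw [hf, integral_indicator hDmeas]
  rw [h0, ← integral_comp_polarCoord_symm]
  have hpt : ∀ p ∈ polarCoord.target,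
      p.1 • f (polarCoord.symm p) =
        (Set.Ioo (0:ℝ) R).indicator (fun r => r / (r ^ 2 + z ^ 2)) p.1 := by
    rintro ⟨r, θ⟩ hp
    rw [polarCoord_target] at hp
    obtain ⟨hr, hθ⟩ := hp
    simp only [Set.mem_Ioi] at hr
    have hsymm : (polarCoord.symm (r, θ)).1 ^ 2 + (polarCoord.symm (r, θ)).2 ^ 2 = r ^ 2 := by
      simp only [polarCoord_symm_apply]
      nlinarith [Real.sin_sq_add_cos_sq θ]
    by_cases hrR : r < R
    · have hmem : polarCoord.symm (r, θ) ∈ D := by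
        rw [hD, Set.mem_setOf_eq, hsymm]
        nlinarith
      rw [hf, Set.indicator_of_mem hmem, Set.indicator_of_mem (by exact ⟨hr, hrR⟩)]
      simp only [smul_eq_mul, hsymm]
      field_simp
    · have hmem : polarCoord.symm (r, θ) ∉ D := by
        rw [hD, Set.mem_setOf_eq, hsymm]
        push_neg at hrR ⊢
        nlinarith
      rw [hf, Set.indicator_of_notMem hmem,
        Set.indicator_of_notMem (by simp [Set.mem_Ioo]; intro; linarith)]
      simp
  rw [setIntegral_congr_fun polarCoord.open_target.measurableSet hpt]
  rw [polarCoord_target, Measure.volume_eq_prod, ← Measure.prod_restrict]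
  have hmul : ∫ p : ℝ × ℝ, (Set.Ioo (0:ℝ) R).indicator (fun r => r / (r ^ 2 + z ^ 2)) p.1
      ∂((volume.restrict (Set.Ioi (0:ℝ))).prod (volume.restrict (Set.Ioo (-π) π))) =
      (∫ r in Set.Ioi (0:ℝ), (Set.Ioo (0:ℝ) R).indicator (fun r => r / (r ^ 2 + z ^ 2)) r) *
      (∫ _ in Set.Ioo (-π) π, (1:ℝ)) := by
    rw [← integral_prod_mul]
    simp
  rw [hmul]
  have h1 : (∫ _ in Set.Ioo (-π) π, (1:ℝ)) = 2 * π := by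
    simp [Real.volume_Ioo]
    rw [max_eq_left (by positivity)]
    ring
  have h2 : (∫ r in Set.Ioi (0:ℝ), (Set.Ioo (0:ℝ) R).indicator (fun r => r / (r ^ 2 + z ^ 2)) r)
      = Real.log (1 + R ^ 2 / z ^ 2) / 2 := by
    rw [integral_indicator measurableSet_Ioo, Measure.restrict_restrict measurableSet_Ioo]
    rw [show Set.Ioo (0:ℝ) R ∩ Set.Ioi 0 = Set.Ioo 0 R by
      rw [Set.inter_eq_left]; exact fun x hx => hx.1]
    rw [← integral_Ioc_eq_integral_Ioo, ← intervalIntegral.integral_of_le hR.le]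
    exact aux_radial R z hR hz
  rw [h1, h2]
  ring

noncomputable def auxE3 : EuclideanSpace ℝ (Fin 3) ≃ᵐ ℝ × (ℝ × ℝ) :=
  (MeasurableEquiv.toLp 2 (Fin 3 → ℝ)).symm.trans
    ((MeasurableEquiv.piFinSuccAbove (fun _ : Fin 3 => ℝ) 2).trans
      ((MeasurableEquiv.refl ℝ).prodCongr (MeasurableEquiv.finTwoArrow)))

lemma auxE3_apply (x : EuclideanSpace ℝ (Fin 3)) : auxE3 x = (x 2, (x 0, x 1)) := rfl

lemma auxE3_mp : MeasurePreserving auxE3 volume volume := by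
  have h1 := EuclideanSpace.volume_preserving_symm_measurableEquiv_toLp (Fin 3)
  have h2 := MeasureTheory.volume_preserving_piFinSuccAbove (fun _ : Fin 3 => ℝ) 2
  have h3 := (MeasurePreserving.id (volume : Measure ℝ)).prod
    (MeasureTheory.volume_preserving_finTwoArrow ℝ)
  exact h3.comp (h2.comp h1)

-- L5
lemma aux_h_integrable (R Z : ℝ) (hR : 0 < R) (hZ : 0 < Z)
    (g : ℝ → ℝ) (hg : ContinuousOn g (Set.Icc 0 Z)) :
    MeasureTheory.IntegrableOn
      (fun z => g z ^ 2 * (Real.pi * Real.log (1 + R ^ 2 / z ^ 2))) (Set.Ioo 0 Z) := by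
  obtain ⟨M, hM⟩ := (isCompact_Icc (a := (0:ℝ)) (b := Z)).exists_bound_of_continuousOn hg
  set c : ℝ := |Real.log (R ^ 2 + Z ^ 2)| with hc
  have hφ : IntegrableOn (fun z : ℝ => (M ^ 2 * Real.pi) * (c + 2 * |Real.log z|))
      (Set.Ioo 0 Z) := by
    refine Integrable.const_mul ?_ _
    exact (integrableOn_const measure_Ioo_lt_top.ne).add
      (((aux_log_integrable Z hZ).abs).const_mul 2)
  have hgm : AEStronglyMeasurable g (volume.restrict (Set.Ioo 0 Z)) :=
    (hg.mono Set.Ioo_subset_Icc_self).aestronglyMeasurable measurableSet_Ioo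
  have hmeas : AEStronglyMeasurable
      (fun z => g z ^ 2 * (Real.pi * Real.log (1 + R ^ 2 / z ^ 2)))
      (volume.restrict (Set.Ioo 0 Z)) := by
    refine AEStronglyMeasurable.congr ((hgm.mul hgm).mul
      ((Real.measurable_log.comp (show Measurable fun z : ℝ => 1 + R ^ 2 / z ^ 2 by fun_prop)).const_mul Real.pi).aestronglyMeasurable) ?_
    filter_upwards with z
    simp only [Pi.mul_apply, Pi.pow_apply, Function.comp]
    ring
  refine Integrable.mono' hφ hmeas ?_
  filter_upwards [ae_restrict_mem measurableSet_Ioo] with z hz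
  obtain ⟨hz0, hzZ⟩ := hz
  have hL0 : 0 ≤ Real.log (1 + R ^ 2 / z ^ 2) := Real.log_nonneg (by nlinarith [sq_nonneg (R / z), div_pos (pow_pos hR 2) (pow_pos hz0 2)])
  have hgM : g z ^ 2 ≤ M ^ 2 := by
    have h1 : |g z| ≤ M := by
      have := hM z ⟨hz0.le, hzZ.le⟩
      rwa [Real.norm_eq_abs] at this
    nlinarith [abs_nonneg (g z), sq_abs (g z)]
  have hLbound : Real.log (1 + R ^ 2 / z ^ 2) ≤ c + 2 * |Real.log z| := by
    have he : 1 + R ^ 2 / z ^ 2 = (R ^ 2 + z ^ 2) / z ^ 2 := by field_simp; ring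
    rw [he, Real.log_div (by positivity) (by positivity),
      show (z:ℝ) ^ 2 = z ^ (2:ℕ) from rfl, Real.log_pow]
    have h1 : Real.log (R ^ 2 + z ^ 2) ≤ Real.log (R ^ 2 + Z ^ 2) :=
      Real.log_le_log (by positivity) (by nlinarith)
    have h2 : Real.log (R ^ 2 + Z ^ 2) ≤ c := le_abs_self _
    have h3 : -(2 * Real.log z) ≤ 2 * |Real.log z| := by
      have := neg_abs_le (Real.log z); linarith [le_abs_self (Real.log z)]
    push_cast
    linarith
  have hnorm : ‖g z ^ 2 * (Real.pi * Real.log (1 + R ^ 2 / z ^ 2))‖ =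
      g z ^ 2 * (Real.pi * Real.log (1 + R ^ 2 / z ^ 2)) := by
    rw [Real.norm_eq_abs, abs_of_nonneg]
    positivity
  rw [hnorm]
  have hc0 : 0 ≤ c + 2 * |Real.log z| := by positivity
  nlinarith [Real.pi_pos, sq_nonneg (g z), mul_le_mul_of_nonneg_left hLbound Real.pi_pos.le,
    mul_le_mul_of_nonneg_right hgM (mul_nonneg Real.pi_pos.le hc0)]

end AuxEndpoint

set_option maxHeartbeats 1000000 in
/-- **`g/r_b ∈ L²` of a cylinder with the endpoint at the origin.**
For `R, Z > 0` and `g` continuous on `[0, Z]`, on the open cylinder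
`U = {x ∈ ℝ³ : x₁² + x₂² < R², 0 < x₃ < Z}` the function
`x ↦ g(x₃)²/(x₁² + x₂² + x₃²)` is integrable and
`∫_U g(x₃)²/(x₁² + x₂² + x₃²) dx = π ∫₀^Z g(z)² ln(1 + R²/z²) dz < ∞`. -/
theorem endpoint_term_L2_cylinder
    (R Z : ℝ) (hR : 0 < R) (hZ : 0 < Z)
    (g : ℝ → ℝ) (hg : ContinuousOn g (Set.Icc 0 Z))
    (U : Set (EuclideanSpace ℝ (Fin 3)))
    (hU : U = {x : EuclideanSpace ℝ (Fin 3) |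
      (x 0) ^ 2 + (x 1) ^ 2 < R ^ 2 ∧ 0 < x 2 ∧ x 2 < Z}) :
    MeasureTheory.IntegrableOn
      (fun x : EuclideanSpace ℝ (Fin 3) =>
        g (x 2) ^ 2 / ((x 0) ^ 2 + (x 1) ^ 2 + (x 2) ^ 2)) U ∧
    ∫ x in U, g (x 2) ^ 2 / ((x 0) ^ 2 + (x 1) ^ 2 + (x 2) ^ 2) =
      Real.pi * ∫ z in (0:ℝ)..Z, g z ^ 2 * Real.log (1 + R ^ 2 / z ^ 2) := by
  set D : Set (ℝ × ℝ) := {p : ℝ × ℝ | p.1 ^ 2 + p.2 ^ 2 < R ^ 2} with hD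
  have hDmeas : MeasurableSet D := (isOpen_lt (by fun_prop) continuous_const).measurableSet
  set G : ℝ × (ℝ × ℝ) → ℝ := fun q => g q.1 ^ 2 / (q.2.1 ^ 2 + q.2.2 ^ 2 + q.1 ^ 2) with hG
  set S : Set (ℝ × (ℝ × ℝ)) := Set.Ioo 0 Z ×ˢ D with hS
  have hUeq : U = auxE3 ⁻¹' S := by
    rw [hU]
    ext x
    simp only [Set.mem_setOf_eq, Set.mem_preimage, auxE3_apply, hS, hD, Set.mem_prod,
      Set.mem_Ioo]
    tauto
  have hfeq : (fun x : EuclideanSpace ℝ (Fin 3) =>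
      g (x 2) ^ 2 / ((x 0) ^ 2 + (x 1) ^ 2 + (x 2) ^ 2)) = fun x => G (auxE3 x) := rfl
  have hrestrict : (volume : Measure (ℝ × (ℝ × ℝ))).restrict S =
      (volume.restrict (Set.Ioo 0 Z)).prod (volume.restrict D) := by
    rw [hS, Measure.volume_eq_prod, Measure.prod_restrict]
  have hgm : AEStronglyMeasurable g (volume.restrict (Set.Ioo 0 Z)) :=
    (hg.mono Set.Ioo_subset_Icc_self).aestronglyMeasurable measurableSet_Ioo
  have hGm : AEStronglyMeasurable G
      ((volume.restrict (Set.Ioo 0 Z)).prod (volume.restrict D)) := by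
    have h1 : AEStronglyMeasurable (fun q : ℝ × (ℝ × ℝ) => g q.1)
        ((volume.restrict (Set.Ioo 0 Z)).prod (volume.restrict D)) := hgm.comp_fst
    have h2 : Measurable (fun q : ℝ × (ℝ × ℝ) => q.2.1 ^ 2 + q.2.2 ^ 2 + q.1 ^ 2) := by fun_prop
    exact ((h1.aemeasurable.pow_const 2).div h2.aemeasurable).aestronglyMeasurable
  -- the inner integral of the norm
  have hinner : ∀ z ∈ Set.Ioo (0:ℝ) Z,
      (∫ p in D, ‖G (z, p)‖) = g z ^ 2 * (Real.pi * Real.log (1 + R ^ 2 / z ^ 2)) := by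
    intro z hz
    have hzeq : ∀ p : ℝ × ℝ, ‖G (z, p)‖ = g z ^ 2 * (p.1 ^ 2 + p.2 ^ 2 + z ^ 2)⁻¹ := by
      intro p
      have hpos : 0 < p.1 ^ 2 + p.2 ^ 2 + z ^ 2 := by
        nlinarith [sq_nonneg p.1, sq_nonneg p.2, pow_pos hz.1 2]
      show ‖g z ^ 2 / (p.1 ^ 2 + p.2 ^ 2 + z ^ 2)‖ = g z ^ 2 * (p.1 ^ 2 + p.2 ^ 2 + z ^ 2)⁻¹
      rw [Real.norm_eq_abs, abs_of_nonneg (by positivity), div_eq_mul_inv]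
    simp_rw [hzeq]
    rw [integral_const_mul, aux_disk_integral R z hR hz.1]
  have hGint : IntegrableOn G S := by
    rw [IntegrableOn, hrestrict, integrable_prod_iff hGm]
    constructor
    · filter_upwards [ae_restrict_mem measurableSet_Ioo] with z hz
      have hi := (aux_disk_integrable R z hR hz.1).const_mul (g z ^ 2)
      refine hi.congr (Filter.Eventually.of_forall fun p => ?_)
      show g z ^ 2 * (p.1 ^ 2 + p.2 ^ 2 + z ^ 2)⁻¹ = g z ^ 2 / (p.1 ^ 2 + p.2 ^ 2 + z ^ 2)
      rw [div_eq_mul_inv]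
    · refine (aux_h_integrable R Z hR hZ g hg).congr ?_
      filter_upwards [ae_restrict_mem measurableSet_Ioo] with z hz
      exact (hinner z hz).symm
  constructor
  · have key := (auxE3_mp.integrableOn_comp_preimage (s := S) (f := G)
      auxE3.measurableEmbedding).mpr hGint
    rw [hUeq]
    exact key
  · have step1 : ∫ x in U, g (x 2) ^ 2 / ((x 0) ^ 2 + (x 1) ^ 2 + (x 2) ^ 2) =
        ∫ q in S, G q := by
      rw [hUeq]
      exact auxE3_mp.setIntegral_preimage_emb auxE3.measurableEmbedding G S
    rw [step1]
    have step2 : ∫ q in S, G q =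
        ∫ z in Set.Ioo 0 Z, g z ^ 2 * (Real.pi * Real.log (1 + R ^ 2 / z ^ 2)) := by
      rw [show (∫ q in S, G q) =
          ∫ q, G q ∂((volume.restrict (Set.Ioo 0 Z)).prod (volume.restrict D)) from by
        rw [← hrestrict]]
      rw [integral_prod _ (by rwa [IntegrableOn, hrestrict] at hGint)]
      refine setIntegral_congr_fun measurableSet_Ioo ?_
      intro z hz
      show (∫ p in D, G (z, p)) = g z ^ 2 * (Real.pi * Real.log (1 + R ^ 2 / z ^ 2))
      rw [← hinner z hz]
      refine setIntegral_congr_fun hDmeas fun p _ => ?_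
      have hpos : 0 < p.1 ^ 2 + p.2 ^ 2 + z ^ 2 := by
        nlinarith [sq_nonneg p.1, sq_nonneg p.2, pow_pos hz.1 2]
      show g z ^ 2 / (p.1 ^ 2 + p.2 ^ 2 + z ^ 2) = ‖g z ^ 2 / (p.1 ^ 2 + p.2 ^ 2 + z ^ 2)‖
      rw [Real.norm_eq_abs, abs_of_nonneg (by positivity)]
    rw [step2, ← integral_Ioc_eq_integral_Ioo, ← intervalIntegral.integral_of_le hZ.le,
      ← intervalIntegral.integral_const_mul]
    exact intervalIntegral.integral_congr fun z _ => by ring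
end

section
/- Let R > 0 and Z > 0, and let U = { x ∈ ℝ³ : x₁² + x₂² < R², 0 < x₃ < Z } be the open cylinder of radius R and height Z. Then the function x ↦ ( ln( √(x₁² + x₂² + x₃²) − x₃ ) )², which is defined at every point of U with x₁² + x₂² > 0, is integrable on U: ∫_U ( ln( √(x₁² + x₂² + x₃²) − x₃ ) )² dx < ∞. -/
open MeasureTheory Set Real

lemma aux_rpow {R : ℝ} (hR : 0 < R) :
    IntegrableOn (fun t : ℝ => |t| ^ (-(2:ℝ)⁻¹)) (Ioo (-R) R) := by
  have hpos : IntegrableOn (fun t : ℝ => t ^ (-(2:ℝ)⁻¹)) (Ioo 0 R) :=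
    (intervalIntegral.integrableOn_Ioo_rpow_iff hR).2 (by norm_num)
  have hpos' : IntegrableOn (fun t : ℝ => |t| ^ (-(2:ℝ)⁻¹)) (Ioo 0 R) := by
    apply hpos.congr_fun (fun t ht => by rw [abs_of_pos ht.1]) measurableSet_Ioo
  have hneg : IntegrableOn (fun t : ℝ => |t| ^ (-(2:ℝ)⁻¹)) (Ioo (-R) 0) := by
    have h := (Measure.measurePreserving_neg (volume : Measure ℝ)).integrableOn_comp_preimage
      (Homeomorph.neg ℝ).measurableEmbedding
      (f := fun t : ℝ => |t| ^ (-(2:ℝ)⁻¹)) (s := Ioo 0 R)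
    have h2 := h.2 hpos'
    have hset : (Neg.neg ⁻¹' Ioo (0:ℝ) R) = Ioo (-R) 0 := by
      ext t
      simp only [Set.mem_preimage, Set.mem_Ioo]
      constructor <;> intro h <;> exact ⟨by linarith [h.1, h.2], by linarith [h.1, h.2]⟩
    have : ((fun t : ℝ => |t| ^ (-(2:ℝ)⁻¹)) ∘ Neg.neg) = fun t : ℝ => |t| ^ (-(2:ℝ)⁻¹) := by
      funext t; simp [Function.comp, abs_neg]
    rwa [hset, this] at h2
  have h0 : IntegrableOn (fun t : ℝ => |t| ^ (-(2:ℝ)⁻¹)) ({0} : Set ℝ) := by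
    rw [IntegrableOn, Measure.restrict_eq_zero.2 (by simp)]
    exact integrable_zero_measure
  have := (hneg.union h0).union hpos'
  refine this.mono_set ?_
  intro t ht
  rcases lt_trichotomy t 0 with h | h | h
  · exact Or.inl (Or.inl ⟨ht.1, h⟩)
  · exact Or.inl (Or.inr (by simp [h]))
  · exact Or.inr ⟨h, ht.2⟩

lemma aux_log {c R : ℝ} (hc : 0 ≤ c) (hR : 0 < R) :
    IntegrableOn (fun t : ℝ => (c + |Real.log t|) ^ 2) (Ioo (-R) R) := by
  set L : ℝ := |Real.log R| with hL
  have hbound : ∀ t ∈ Ioo (-R) R,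
      (c + |Real.log t|) ^ 2 ≤ ((c + L) ^ 2 + 2 * c ^ 2) + 32 * |t| ^ (-(2:ℝ)⁻¹) := by
    intro t ht
    have hL0 : 0 ≤ L := abs_nonneg _
    have habs : |t| < R := abs_lt.2 ⟨ht.1, ht.2⟩
    rcases eq_or_ne t 0 with rfl | ht0
    · have : (0:ℝ) ≤ 32 * |(0:ℝ)| ^ (-(2:ℝ)⁻¹) := by positivity
      simp only [Real.log_zero, abs_zero, add_zero, Real.zero_rpow (by norm_num : (-(2:ℝ)⁻¹) ≠ 0)]
      nlinarith [sq_nonneg (c + L), sq_nonneg c]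
    · have habs0 : 0 < |t| := abs_pos.2 ht0
      have hlogt : Real.log t = Real.log |t| := (Real.log_abs t).symm
      rcases le_or_gt 1 |t| with h1 | h1
      · -- |t| ≥ 1 : |log t| = log |t| ≤ log R ≤ L
        have hlog_nonneg : 0 ≤ Real.log |t| := Real.log_nonneg h1
        have : Real.log |t| ≤ Real.log R := Real.log_le_log habs0 habs.le
        have hle : |Real.log t| ≤ L := by
          rw [hlogt, abs_of_nonneg hlog_nonneg]
          exact this.trans (le_abs_self _)
        have hrpow : (0:ℝ) ≤ 32 * |t| ^ (-(2:ℝ)⁻¹) := by positivity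
        nlinarith [abs_nonneg (Real.log t), sq_nonneg c]
      · -- |t| < 1 : |log t| = -log|t| ≤ 4 |t|^(-1/4)
        set y : ℝ := |t| ^ (-(4:ℝ)⁻¹) with hy
        have hy0 : 0 < y := Real.rpow_pos_of_pos habs0 _
        have hlogy : Real.log y = -(4:ℝ)⁻¹ * Real.log |t| := Real.log_rpow habs0 _
        have h1' : Real.log y ≤ y := (Real.log_le_sub_one_of_pos hy0).trans (by linarith)
        have hneg : Real.log |t| ≤ 0 := Real.log_nonpos (abs_nonneg t) h1.le
        have hu : |Real.log t| = -Real.log |t| := by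
          rw [hlogt, abs_of_nonpos hneg]
        have hu4 : |Real.log t| ≤ 4 * y := by
          rw [hu]; nlinarith
        have hy2 : y * y = |t| ^ (-(2:ℝ)⁻¹) := by
          rw [hy, ← Real.rpow_add habs0]; norm_num
        have hunn : 0 ≤ |Real.log t| := abs_nonneg _
        nlinarith [sq_nonneg (c - |Real.log t|), sq_nonneg (c + L), hy0.le, sq_nonneg c]
  have hg : IntegrableOn
      (fun t : ℝ => ((c + L) ^ 2 + 2 * c ^ 2) + 32 * |t| ^ (-(2:ℝ)⁻¹)) (Ioo (-R) R) := by
    exact (integrableOn_const measure_Ioo_lt_top.ne).add ((aux_rpow hR).const_mul 32)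
  refine Integrable.mono' hg ?_ ?_
  · exact ((measurable_const.add Real.measurable_log.abs).pow_const 2).aestronglyMeasurable
  · refine (ae_restrict_iff' measurableSet_Ioo).2 (ae_of_all _ fun t ht => ?_)
    rw [Real.norm_eq_abs, abs_of_nonneg (by positivity)]
    exact hbound t ht



lemma aux_ptwise {R Z a b c : ℝ} (hR : 0 < R) (hZ : 0 < Z) (ha : a ≠ 0)
    (hab : a ^ 2 + b ^ 2 < R ^ 2) (hc0 : 0 < c) (hcZ : c < Z) :
    (Real.log (Real.sqrt (a ^ 2 + b ^ 2 + c ^ 2) - c)) ^ 2 ≤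
      4 * ((|Real.log (Real.sqrt (R ^ 2 + Z ^ 2))| +
        |Real.log (2 * Real.sqrt (R ^ 2 + Z ^ 2))|) + |Real.log a|) ^ 2 := by
  set M : ℝ := Real.sqrt (R ^ 2 + Z ^ 2) with hM
  set A : ℝ := |Real.log M| + |Real.log (2 * M)| with hA
  have hA0 : 0 ≤ A := by positivity
  have hM0 : 0 < M := Real.sqrt_pos.2 (by positivity)
  set ρ2 : ℝ := a ^ 2 + b ^ 2 with hρ2
  set s : ℝ := Real.sqrt (ρ2 + c ^ 2) with hs
  have ha2 : 0 < a ^ 2 := by positivity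
  have hρ2pos : 0 < ρ2 := by nlinarith [sq_nonneg b]
  have hs0 : 0 ≤ s := Real.sqrt_nonneg _
  have hs2 : s ^ 2 = ρ2 + c ^ 2 := Real.sq_sqrt (by positivity)
  have hw : 0 < s - c := by nlinarith
  have hZM : Z ≤ M := by
    rw [hM]
    have h := Real.sqrt_le_sqrt (by nlinarith : Z ^ 2 ≤ R ^ 2 + Z ^ 2)
    rwa [Real.sqrt_sq hZ.le] at h
  have hcM : c ≤ M := le_trans hcZ.le hZM
  have hsM : s ≤ M := by
    rw [hs, hM]
    apply Real.sqrt_le_sqrt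
    nlinarith
  have hwM : s - c ≤ M := by linarith
  have hlow : ρ2 / (2 * M) ≤ s - c := by
    rw [div_le_iff₀ (by positivity)]
    nlinarith
  have hup : Real.log (s - c) ≤ A := by
    calc Real.log (s - c) ≤ Real.log M := Real.log_le_log hw hwM
      _ ≤ |Real.log M| := le_abs_self _
      _ ≤ A := le_add_of_nonneg_right (abs_nonneg _)
  have hdown : -(A + 2 * |Real.log a|) ≤ Real.log (s - c) := by
    have h1 : Real.log (ρ2 / (2 * M)) ≤ Real.log (s - c) :=
      Real.log_le_log (by positivity) hlow
    have h2 : Real.log (ρ2 / (2 * M)) = Real.log ρ2 - Real.log (2 * M) :=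
      Real.log_div (ne_of_gt hρ2pos) (by positivity)
    have h3 : Real.log (a ^ 2) ≤ Real.log ρ2 := by
      apply Real.log_le_log ha2
      rw [hρ2]
      exact le_add_of_nonneg_right (sq_nonneg b)
    have h4 : Real.log (a ^ 2) = 2 * Real.log a := by
      rw [Real.log_pow]; push_cast; ring
    have h5 : -|Real.log a| ≤ Real.log a := neg_abs_le _
    have h6 : -|Real.log (2 * M)| ≤ -Real.log (2 * M) := neg_le_neg (le_abs_self _)
    have h7 : (0:ℝ) ≤ |Real.log M| := abs_nonneg _
    rw [hA]
    linarith [h1, h2, h3, h4, h5, h6, h7]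
  have habsle : |Real.log (s - c)| ≤ A + 2 * |Real.log a| :=
    abs_le.2 ⟨hdown, hup.trans (le_add_of_nonneg_right (by positivity))⟩
  have h8 : (Real.log (s - c)) ^ 2 ≤ (A + 2 * |Real.log a|) ^ 2 := by
    have h := pow_le_pow_left₀ (abs_nonneg (Real.log (s - c))) habsle 2
    rwa [sq_abs] at h
  have h9 : (0:ℝ) ≤ |Real.log a| := abs_nonneg _
  nlinarith [h8, h9, hA0, mul_nonneg hA0 h9]

/-- **Square-integrability of the endpoint logarithmic factor.**
For `R, Z > 0`, on the open cylinder `U = {x ∈ ℝ³ : x₁² + x₂² < R², 0 < x₃ < Z}`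
the function `x ↦ (ln(√(x₁² + x₂² + x₃²) - x₃))²` is integrable. -/
theorem endpoint_log_L2_cylinder
    (R Z : ℝ) (hR : 0 < R) (hZ : 0 < Z)
    (U : Set (EuclideanSpace ℝ (Fin 3)))
    (hU : U = {x : EuclideanSpace ℝ (Fin 3) |
      (x 0) ^ 2 + (x 1) ^ 2 < R ^ 2 ∧ 0 < x 2 ∧ x 2 < Z}) :
    MeasureTheory.IntegrableOn
      (fun x : EuclideanSpace ℝ (Fin 3) =>
        (Real.log (Real.sqrt ((x 0) ^ 2 + (x 1) ^ 2 + (x 2) ^ 2) - x 2)) ^ 2)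
      U := by
  set M : ℝ := Real.sqrt (R ^ 2 + Z ^ 2) with hM
  set A : ℝ := |Real.log M| + |Real.log (2 * M)| with hA
  have hA0 : 0 ≤ A := by positivity
  set f1D : ℝ → ℝ := fun t => 4 * (A + |Real.log t|) ^ 2 with hf1D
  set fv : Fin 3 → ℝ → ℝ :=
    ![(Ioo (-R) R).indicator f1D, (Ioo (-R) R).indicator 1, (Ioo 0 Z).indicator 1] with hfv
  have hGpi : Integrable (fun x : Fin 3 → ℝ => ∏ i, fv i (x i)) := by
    apply Integrable.fintype_prod (f := fv)
    intro i
    fin_cases i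
    · show Integrable ((Ioo (-R) R).indicator f1D) volume
      rw [integrable_indicator_iff measurableSet_Ioo]
      exact (aux_log hA0 hR).const_mul 4
    · show Integrable ((Ioo (-R) R).indicator 1) volume
      rw [integrable_indicator_iff measurableSet_Ioo]
      exact integrableOn_const measure_Ioo_lt_top.ne
    · show Integrable ((Ioo 0 Z).indicator 1) volume
      rw [integrable_indicator_iff measurableSet_Ioo]
      exact integrableOn_const measure_Ioo_lt_top.ne
  have hG : Integrable (fun x : EuclideanSpace ℝ (Fin 3) => ∏ i, fv i (x i)) := by
    have e := (EuclideanSpace.volume_preserving_symm_measurableEquiv_toLp (Fin 3)).symm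
    rw [← e.integrable_comp_emb (MeasurableEquiv.measurableEmbedding _)]
    exact hGpi
  have hUmeas : MeasurableSet U := by
    rw [hU]
    have h0 : Measurable fun x : EuclideanSpace ℝ (Fin 3) => x 0 := (measurable_pi_apply 0).comp (WithLp.measurable_ofLp 2 _)
    have h1 : Measurable fun x : EuclideanSpace ℝ (Fin 3) => x 1 := (measurable_pi_apply 1).comp (WithLp.measurable_ofLp 2 _)
    have h2 : Measurable fun x : EuclideanSpace ℝ (Fin 3) => x 2 := (measurable_pi_apply 2).comp (WithLp.measurable_ofLp 2 _)
    exact (measurableSet_lt ((h0.pow_const 2).add (h1.pow_const 2)) measurable_const).inter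
      ((measurableSet_lt measurable_const h2).inter (measurableSet_lt h2 measurable_const))
  refine Integrable.mono' hG.restrict ?_ ?_
  · have h0 : Measurable fun x : EuclideanSpace ℝ (Fin 3) => x 0 := (measurable_pi_apply 0).comp (WithLp.measurable_ofLp 2 _)
    have h1 : Measurable fun x : EuclideanSpace ℝ (Fin 3) => x 1 := (measurable_pi_apply 1).comp (WithLp.measurable_ofLp 2 _)
    have h2 : Measurable fun x : EuclideanSpace ℝ (Fin 3) => x 2 := (measurable_pi_apply 2).comp (WithLp.measurable_ofLp 2 _)
    exact ((Real.measurable_log.comp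
      ((((h0.pow_const 2).add (h1.pow_const 2)).add (h2.pow_const 2)).sqrt.sub h2)).pow_const
      2).aestronglyMeasurable
  · have hzero : ∀ᵐ x : EuclideanSpace ℝ (Fin 3), x 0 ≠ 0 := by
      have e := EuclideanSpace.volume_preserving_symm_measurableEquiv_toLp (Fin 3)
      exact e.quasiMeasurePreserving.ae (Measure.ae_eval_ne _ 0 0)
    filter_upwards [ae_restrict_mem hUmeas, ae_restrict_of_ae hzero] with x hxU hx0
    rw [hU] at hxU
    obtain ⟨hρ, hz0, hzZ⟩ := hxU
    have hGx : ∏ i, fv i (x i) = 4 * (A + |Real.log (x 0)|) ^ 2 := by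
      have hx0R : x 0 ∈ Ioo (-R) R := by
        rw [Set.mem_Ioo]
        have h02 : (x 0) ^ 2 < R ^ 2 := by nlinarith [sq_nonneg (x 1)]
        constructor <;> nlinarith [sq_nonneg (x 0 + R), sq_nonneg (x 0 - R)]
      have hx1R : x 1 ∈ Ioo (-R) R := by
        rw [Set.mem_Ioo]
        have h12 : (x 1) ^ 2 < R ^ 2 := by nlinarith [sq_nonneg (x 0)]
        constructor <;> nlinarith [sq_nonneg (x 1 + R), sq_nonneg (x 1 - R)]
      have hx2R : x 2 ∈ Ioo 0 Z := ⟨hz0, hzZ⟩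
      rw [Fin.prod_univ_three]
      simp only [hfv, Matrix.cons_val_zero, Matrix.cons_val_one, Matrix.head_cons,
        Matrix.cons_val_two, Matrix.tail_cons,
        Set.indicator_of_mem hx0R, Set.indicator_of_mem hx1R, Set.indicator_of_mem hx2R,
        Pi.one_apply, hf1D]
      ring
    rw [hGx, Real.norm_eq_abs, abs_of_nonneg (sq_nonneg _)]
    rw [hA, hM]
    exact aux_ptwise hR hZ hx0 hρ hz0 hzZ
end

section
/- Let r > 0 and α ∈ ℝ. Then for every z ∈ ℝ the quantity r² + z² − z √(r² + z²) is strictly positive, and the function Φ(z) = 2 r^{α−1} ( √(z² + r²) + z ) − r^{α} arctan(z/r) is differentiable with Φ'(z) = r^{3+α} / ( r² + z² − z √(r² + z²) )². -/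
/-!
Write `s = √(r² + z²)`. Since `s² - z² = r²`, the denominator factors as
`r² + z² - z s = s (s - z)` with `z < s`, and `(s - z)(s + z) = r²` turns the claimed derivative
into `r^{α-1} ((s + z) / s)²`. Differentiating `Φ` gives
`2 r^{α-1} (s + z) / s - r^{α+1} / s²`, which equals it because `2 s (s + z) - r² = (s + z)²`.
-/

open Real

section

variable {r : ℝ} (z : ℝ)

lemma lt_sqrt_sq_add_sq (hr : r ≠ 0) : z < √(r ^ 2 + z ^ 2) :=
  lt_sqrt_of_sq_lt (by nlinarith [pow_pos (abs_pos.mpr hr) 2, sq_abs r])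

lemma sq_add_sq_sub_mul_sqrt_eq :
    r ^ 2 + z ^ 2 - z * √(r ^ 2 + z ^ 2) = √(r ^ 2 + z ^ 2) * (√(r ^ 2 + z ^ 2) - z) := by
  rw [mul_sub, mul_self_sqrt (by positivity)]
  ring

lemma sq_add_sq_sub_mul_sqrt_pos (hr : r ≠ 0) : 0 < r ^ 2 + z ^ 2 - z * √(r ^ 2 + z ^ 2) := by
  have hz := lt_sqrt_sq_add_sq z hr
  rw [sq_add_sq_sub_mul_sqrt_eq]
  exact mul_pos (by positivity) (sub_pos.mpr hz)

lemma hasDerivAt_sqrt_sq_add_sq_add (hr : r ≠ 0) :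
    HasDerivAt (fun z : ℝ => √(z ^ 2 + r ^ 2) + z)
      ((√(r ^ 2 + z ^ 2) + z) / √(r ^ 2 + z ^ 2)) z := by
  have hs : √(r ^ 2 + z ^ 2) ≠ 0 := (sqrt_pos.mpr (by positivity)).ne'
  refine ((((hasDerivAt_pow 2 z).add_const (r ^ 2)).sqrt (by positivity)).add
    (hasDerivAt_id' z)).congr_deriv ?_
  rw [add_comm (z ^ 2)]
  field_simp
  ring

lemma hasDerivAt_arctan_div (hr : r ≠ 0) :
    HasDerivAt (fun z : ℝ => arctan (z / r)) (r / (r ^ 2 + z ^ 2)) z := by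
  convert ((hasDerivAt_id' z).div_const r).arctan using 1
  field_simp

end

lemma weighted_derivative_identity {r s z : ℝ} (α : ℝ) (hr : 0 < r) (hs : s ≠ 0)
    (hzs : z < s) (hs2 : s ^ 2 = r ^ 2 + z ^ 2) :
    2 * r ^ (α - 1) * ((s + z) / s) - r ^ α * (r / (r ^ 2 + z ^ 2)) =
      r ^ (3 + α) / (s * (s - z)) ^ 2 := by
  have hα : r ^ α = r ^ (α - 1) * r := by
    rw [← rpow_add_one hr.ne']; ring_nf
  have h3α : r ^ (3 + α) = r ^ (α - 1) * r ^ 4 := by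
    rw [← rpow_natCast, ← rpow_add hr]; ring_nf
  have hr2 : r ^ 2 = (s - z) * (s + z) := by linear_combination -hs2
  have hsz : s - z ≠ 0 := sub_ne_zero.mpr hzs.ne'
  rw [hα, h3α, ← hs2, show r ^ 4 = (r ^ 2) ^ 2 by ring, hr2]
  field_simp
  linear_combination -hr2

/-- **Antiderivative for the weighted gradient norm of the endpoint log factor.**
For `r > 0` and `α ∈ ℝ`: for every `z` the quantity `r² + z² - z√(r² + z²)` is
strictly positive, and `Φ(z) = 2 r^{α-1}(√(z² + r²) + z) - r^α arctan(z/r)` is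
differentiable with `Φ'(z) = r^{3+α}/(r² + z² - z√(r² + z²))²`. -/
theorem weighted_gradient_antiderivative (r α : ℝ) (hr : 0 < r) :
    (∀ z : ℝ, 0 < r ^ 2 + z ^ 2 - z * Real.sqrt (r ^ 2 + z ^ 2)) ∧
    ∀ z : ℝ,
      HasDerivAt
        (fun z : ℝ =>
          2 * r ^ (α - 1) * (Real.sqrt (z ^ 2 + r ^ 2) + z) -
            r ^ α * Real.arctan (z / r))
        (r ^ (3 + α) / (r ^ 2 + z ^ 2 - z * Real.sqrt (r ^ 2 + z ^ 2)) ^ 2) z := by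
  refine ⟨fun z => sq_add_sq_sub_mul_sqrt_pos z hr.ne', fun z => ?_⟩
  have hΦ := ((hasDerivAt_sqrt_sq_add_sq_add z hr.ne').const_mul (2 * r ^ (α - 1))).sub
    ((hasDerivAt_arctan_div z hr.ne').const_mul (r ^ α))
  rwa [weighted_derivative_identity α hr (sqrt_pos.mpr (by positivity)).ne'
    (lt_sqrt_sq_add_sq z hr.ne') (sq_sqrt (by positivity)),
    ← sq_add_sq_sub_mul_sqrt_eq] at hΦ
end

section
/- Let α > 0, R > 0 and a < b be real numbers. Then ∫₀^R ∫_a^b r^{3+α} / ( r² + z² − z √(r² + z²) )² dz dr < ∞; that is, the weighted double integral expressing ‖∇_∥ ln(√(r²+z²) − z)‖²_{L²_α} over the cylinder of radius R and heights between a and b is finite for every α > 0. -/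
open MeasureTheory Set

/-!
Writing `s = √(r² + z²)`, the denominator satisfies `2 (r² + z² - z s) - r² = (s - z)² ≥ 0`,
so the integrand is at most `4 r^(α-1)`, which is integrable near `r = 0` exactly when `α > 0`.
-/

lemma half_sq_le_sq_add_sq_sub_mul_sqrt (r z : ℝ) :
    r ^ 2 / 2 ≤ r ^ 2 + z ^ 2 - z * √(r ^ 2 + z ^ 2) := by
  have hsq : √(r ^ 2 + z ^ 2) ^ 2 = r ^ 2 + z ^ 2 := Real.sq_sqrt (by positivity)
  nlinarith [sq_nonneg (√(r ^ 2 + z ^ 2) - z)]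

lemma rpow_div_sq_sub_mul_sqrt_le {r : ℝ} (hr : 0 < r) (α z : ℝ) :
    r ^ (3 + α) / (r ^ 2 + z ^ 2 - z * √(r ^ 2 + z ^ 2)) ^ 2 ≤ 4 * r ^ (α - 1) := by
  have hD := half_sq_le_sq_add_sq_sub_mul_sqrt r z
  have hpow : r ^ (3 + α) = r ^ (α - 1) * r ^ 4 := by
    rw [← Real.rpow_natCast r 4, ← Real.rpow_add hr]
    congr 1
    ring
  calc r ^ (3 + α) / (r ^ 2 + z ^ 2 - z * √(r ^ 2 + z ^ 2)) ^ 2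
      ≤ r ^ (3 + α) / (r ^ 2 / 2) ^ 2 := by gcongr
    _ = 4 * r ^ (α - 1) := by
      rw [hpow]
      field_simp
      ring

lemma IntegrableOn.comp_fst_prod {X Y E : Type*} [MeasurableSpace X] [MeasurableSpace Y]
    [NormedAddCommGroup E] {μ : Measure X} {ν : Measure Y} [SFinite μ] [SFinite ν] {f : X → E}
    {s : Set X} {t : Set Y} (hf : IntegrableOn f s μ) (ht : ν t ≠ ⊤) :
    IntegrableOn (fun p : X × Y => f p.1) (s ×ˢ t) (μ.prod ν) := by
  have : IsFiniteMeasure (ν.restrict t) := isFiniteMeasure_restrict.mpr ht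
  rw [IntegrableOn, ← Measure.prod_restrict]
  exact hf.comp_fst _

theorem weighted_gradient_integrable_general
    (α R a b : ℝ) (hα : 0 < α) :
    MeasureTheory.IntegrableOn
      (fun p : ℝ × ℝ =>
        p.1 ^ (3 + α) /
          (p.1 ^ 2 + p.2 ^ 2 - p.2 * Real.sqrt (p.1 ^ 2 + p.2 ^ 2)) ^ 2)
      (Set.Ioo 0 R ×ˢ Set.Ioo a b) := by
  have hdom : IntegrableOn (fun p : ℝ × ℝ => 4 * p.1 ^ (α - 1)) (Ioo 0 R ×ˢ Ioo a b) := by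
    have hrpow : IntegrableOn (fun r : ℝ => r ^ (α - 1)) (Ioo 0 R) :=
      (intervalIntegral.intervalIntegrable_rpow' (by linarith)).1.mono_set Ioo_subset_Ioc_self
    exact IntegrableOn.comp_fst_prod (hrpow.const_mul 4) measure_Ioo_lt_top.ne
  refine hdom.mono' (Measurable.aestronglyMeasurable (by fun_prop)) ?_
  filter_upwards [ae_restrict_mem (measurableSet_Ioo.prod measurableSet_Ioo)]
    with ⟨r, z⟩ ⟨hr, _⟩
  have hr0 : 0 < r := hr.1
  rw [Real.norm_of_nonneg (by positivity)]
  exact rpow_div_sq_sub_mul_sqrt_le hr0 α z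

/-- **Finiteness of the weighted norm of the in-plane gradient of the endpoint
log factor.** For `α > 0`, `R > 0` and `a < b`, the double integral
`∫₀^R ∫_a^b r^{3+α}/(r² + z² - z√(r² + z²))² dz dr` is finite; i.e. the integrand
is integrable on `(0, R) × (a, b)`. -/
theorem weighted_gradient_integrable
    (α R a b : ℝ) (hα : 0 < α) (hR : 0 < R) (hab : a < b) :
    MeasureTheory.IntegrableOn
      (fun p : ℝ × ℝ =>
        p.1 ^ (3 + α) /
          (p.1 ^ 2 + p.2 ^ 2 - p.2 * Real.sqrt (p.1 ^ 2 + p.2 ^ 2)) ^ 2)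
      (Set.Ioo 0 R ×ˢ Set.Ioo a b) :=
  weighted_gradient_integrable_general α R a b hα
end

section
/- Let a < b be real numbers and define u : ℝ³ → ℝ by u(x, y, z) = z · ln( ( √(x² + y² + (z − b)²) − (z − b) ) / ( √(x² + y² + (z − a)²) − (z − a) ) ) + √(x² + y² + (z − b)²) − √(x² + y² + (z − a)²). Then u is smooth on the open set { (x, y, z) ∈ ℝ³ : x² + y² > 0 } and is harmonic there: Δu = 0 at every point off the z-axis. -/
open Real

local notation "E3" => EuclideanSpace ℝ (Fin 3)

noncomputable def pr (i : Fin 3) : E3 →L[ℝ] ℝ := EuclideanSpace.proj i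

noncomputable def qf (c : ℝ) (x : E3) : ℝ := (x 0) ^ 2 + (x 1) ^ 2 + (x 2 - c) ^ 2
noncomputable def Rf (c : ℝ) (x : E3) : ℝ := Real.sqrt (qf c x)
noncomputable def Nf (c : ℝ) (x : E3) : ℝ := Rf c x - (x 2 - c)
noncomputable def psi (c : ℝ) (x : E3) : ℝ := x 2 * Real.log (Nf c x) + Rf c x

variable {c : ℝ} {x : E3}

lemma qf_pos (h : 0 < (x 0) ^ 2 + (x 1) ^ 2) : 0 < qf c x :=
  add_pos_of_pos_of_nonneg h (sq_nonneg _)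

lemma Rf_pos (h : 0 < (x 0) ^ 2 + (x 1) ^ 2) : 0 < Rf c x := Real.sqrt_pos.2 (qf_pos h)

lemma Rf_sq (h : 0 < (x 0) ^ 2 + (x 1) ^ 2) : Rf c x ^ 2 = qf c x := Real.sq_sqrt (qf_pos h).le

lemma Nf_pos (h : 0 < (x 0) ^ 2 + (x 1) ^ 2) : 0 < Nf c x := by
  have h1 : Real.sqrt ((x 2 - c) ^ 2) < Real.sqrt (qf c x) :=
    Real.sqrt_lt_sqrt (sq_nonneg _) (by unfold qf; linarith)
  rw [Real.sqrt_sq_eq_abs] at h1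
  have h2 := le_abs_self (x 2 - c)
  unfold Nf Rf; linarith

lemma hasF_coord (i : Fin 3) (x : E3) : HasFDerivAt (fun y : E3 => y i) (pr i) x :=
  (EuclideanSpace.proj i : E3 →L[ℝ] ℝ).hasFDerivAt.congr_of_eventuallyEq
    (Filter.Eventually.of_forall fun y => rfl)

noncomputable def Dq (c : ℝ) (x : E3) : E3 →L[ℝ] ℝ :=
  ((x 0 • pr 0 + x 0 • pr 0) + (x 1 • pr 1 + x 1 • pr 1)) +
    ((x 2 - c) • pr 2 + (x 2 - c) • pr 2)

lemma hasF_q (c : ℝ) (x : E3) : HasFDerivAt (qf c) (Dq c x) x := by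
  have hq : qf c = fun y : E3 => (y 0 * y 0 + y 1 * y 1) + ((y 2 - c) * (y 2 - c)) := by
    funext y; unfold qf; ring
  rw [hq]
  exact (((hasF_coord 0 x).mul (hasF_coord 0 x)).add
    ((hasF_coord 1 x).mul (hasF_coord 1 x))).add
    (((hasF_coord 2 x).sub_const c).mul ((hasF_coord 2 x).sub_const c))

noncomputable def DR (c : ℝ) (x : E3) : E3 →L[ℝ] ℝ := (1 / (2 * Rf c x)) • Dq c x

lemma hasF_R {c : ℝ} {x : E3} (h : 0 < (x 0) ^ 2 + (x 1) ^ 2) :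
    HasFDerivAt (Rf c) (DR c x) x := by
  have := (Real.hasDerivAt_sqrt (qf_pos h (c := c)).ne').comp_hasFDerivAt x (hasF_q c x)
  have e : (fun y => Real.sqrt (qf c y)) = Rf c := rfl
  rw [← e]; simpa [Rf, DR, Function.comp_def] using this

noncomputable def DN (c : ℝ) (x : E3) : E3 →L[ℝ] ℝ := DR c x - pr 2

lemma hasF_N {c : ℝ} {x : E3} (h : 0 < (x 0) ^ 2 + (x 1) ^ 2) :
    HasFDerivAt (Nf c) (DN c x) x :=
  (hasF_R h).sub ((hasF_coord 2 x).sub_const c)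

noncomputable def Dpsi (c : ℝ) (x : E3) : E3 →L[ℝ] ℝ :=
  (x 2 • ((Nf c x)⁻¹ • DN c x) + Real.log (Nf c x) • pr 2) + DR c x

lemma hasF_psi {c : ℝ} {x : E3} (h : 0 < (x 0) ^ 2 + (x 1) ^ 2) :
    HasFDerivAt (psi c) (Dpsi c x) x :=
  ((hasF_coord 2 x).mul ((hasF_N h).log (Nf_pos h).ne')).add (hasF_R h)

noncomputable def A0 (c : ℝ) (y : E3) : ℝ := y 0 * (Rf c y + c) / (Rf c y * Nf c y)
noncomputable def A1 (c : ℝ) (y : E3) : ℝ := y 1 * (Rf c y + c) / (Rf c y * Nf c y)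
noncomputable def A2 (c : ℝ) (y : E3) : ℝ := Real.log (Nf c y) - c / Rf c y

lemma Dpsi_e0 {c : ℝ} {x : E3} (h : 0 < (x 0) ^ 2 + (x 1) ^ 2) :
    Dpsi c x (EuclideanSpace.single 0 1) = A0 c x := by
  have hr := (Rf_pos h (c := c)).ne'
  have hn := (Nf_pos h (c := c)).ne'
  simp only [Dpsi, DN, DR, Dq, pr, A0, Nf, ContinuousLinearMap.add_apply,
    ContinuousLinearMap.coe_smul', Pi.smul_apply, ContinuousLinearMap.sub_apply,
    PiLp.proj_apply, EuclideanSpace.single_apply, smul_eq_mul, Fin.reduceEq, reduceIte]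
  norm_num
  rw [Nf] at hn
  field_simp
  ring

lemma Dpsi_e1 {c : ℝ} {x : E3} (h : 0 < (x 0) ^ 2 + (x 1) ^ 2) :
    Dpsi c x (EuclideanSpace.single 1 1) = A1 c x := by
  have hr := (Rf_pos h (c := c)).ne'
  have hn := (Nf_pos h (c := c)).ne'
  simp only [Dpsi, DN, DR, Dq, pr, A1, Nf, ContinuousLinearMap.add_apply,
    ContinuousLinearMap.coe_smul', Pi.smul_apply, ContinuousLinearMap.sub_apply,
    PiLp.proj_apply, EuclideanSpace.single_apply, smul_eq_mul, Fin.reduceEq, reduceIte]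
  norm_num
  rw [Nf] at hn
  field_simp
  ring

lemma Dpsi_e2 {c : ℝ} {x : E3} (h : 0 < (x 0) ^ 2 + (x 1) ^ 2) :
    Dpsi c x (EuclideanSpace.single 2 1) = A2 c x := by
  have hr := (Rf_pos h (c := c)).ne'
  have hn := (Nf_pos h (c := c)).ne'
  simp only [Dpsi, DN, DR, Dq, pr, A2, Nf, ContinuousLinearMap.add_apply,
    ContinuousLinearMap.coe_smul', Pi.smul_apply, ContinuousLinearMap.sub_apply,
    PiLp.proj_apply, EuclideanSpace.single_apply, smul_eq_mul, Fin.reduceEq, reduceIte]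
  norm_num
  rw [Nf] at hn
  field_simp
  ring

noncomputable def E0v (c : ℝ) (x : E3) : ℝ :=
  (Rf c x + c) / (Rf c x * Nf c x) +
    (x 0) ^ 2 * (Rf c x * Nf c x - (Rf c x + c) * (2 * Rf c x - (x 2 - c))) /
      (Rf c x ^ 3 * Nf c x ^ 2)

noncomputable def E1v (c : ℝ) (x : E3) : ℝ :=
  (Rf c x + c) / (Rf c x * Nf c x) +
    (x 1) ^ 2 * (Rf c x * Nf c x - (Rf c x + c) * (2 * Rf c x - (x 2 - c))) /
      (Rf c x ^ 3 * Nf c x ^ 2)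

noncomputable def E2v (c : ℝ) (x : E3) : ℝ :=
  -1 / Rf c x + c * (x 2 - c) / Rf c x ^ 3

lemma secondA0 {c : ℝ} {x : E3} (h : 0 < (x 0) ^ 2 + (x 1) ^ 2) :
    ∃ L : E3 →L[ℝ] ℝ, HasFDerivAt (A0 c) L x ∧
      L (EuclideanSpace.single 0 1) = E0v c x := by
  have hr := (Rf_pos h (c := c)).ne'
  have hn := (Nf_pos h (c := c)).ne'
  have hA : A0 c = fun y => (y 0 * (Rf c y + c)) * (Rf c y * Nf c y)⁻¹ := by
    funext y; rw [A0, div_eq_mul_inv]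
  have hnum := (hasF_coord 0 x).mul ((hasF_R (c := c) h).add_const c)
  have hinv := (hasDerivAt_inv (mul_ne_zero hr hn)).comp_hasFDerivAt x
    ((hasF_R (c := c) h).mul (hasF_N (c := c) h))
  simp only [Function.comp_def] at hinv
  have hfull := hnum.mul hinv
  replace hfull := hfull.congr_of_eventuallyEq (Filter.Eventually.of_forall fun y => congrFun hA y)
  refine ⟨_, hfull, ?_⟩
  simp only [DN, DR, Dq, pr, E0v, Nf, Pi.mul_apply, ContinuousLinearMap.add_apply,
    ContinuousLinearMap.coe_smul', Pi.smul_apply, ContinuousLinearMap.sub_apply,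
    PiLp.proj_apply, EuclideanSpace.single_apply, smul_eq_mul, Fin.reduceEq, reduceIte]
  norm_num
  rw [Nf] at hn
  field_simp
  ring

lemma secondA1 {c : ℝ} {x : E3} (h : 0 < (x 0) ^ 2 + (x 1) ^ 2) :
    ∃ L : E3 →L[ℝ] ℝ, HasFDerivAt (A1 c) L x ∧
      L (EuclideanSpace.single 1 1) = E1v c x := by
  have hr := (Rf_pos h (c := c)).ne'
  have hn := (Nf_pos h (c := c)).ne'
  have hA : A1 c = fun y => (y 1 * (Rf c y + c)) * (Rf c y * Nf c y)⁻¹ := by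
    funext y; rw [A1, div_eq_mul_inv]
  have hnum := (hasF_coord 1 x).mul ((hasF_R (c := c) h).add_const c)
  have hinv := (hasDerivAt_inv (mul_ne_zero hr hn)).comp_hasFDerivAt x
    ((hasF_R (c := c) h).mul (hasF_N (c := c) h))
  simp only [Function.comp_def] at hinv
  have hfull := hnum.mul hinv
  replace hfull := hfull.congr_of_eventuallyEq (Filter.Eventually.of_forall fun y => congrFun hA y)
  refine ⟨_, hfull, ?_⟩
  simp only [DN, DR, Dq, pr, E1v, Nf, Pi.mul_apply, ContinuousLinearMap.add_apply,
    ContinuousLinearMap.coe_smul', Pi.smul_apply, ContinuousLinearMap.sub_apply,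
    PiLp.proj_apply, EuclideanSpace.single_apply, smul_eq_mul, Fin.reduceEq, reduceIte]
  norm_num
  rw [Nf] at hn
  field_simp
  ring

lemma secondA2 {c : ℝ} {x : E3} (h : 0 < (x 0) ^ 2 + (x 1) ^ 2) :
    ∃ L : E3 →L[ℝ] ℝ, HasFDerivAt (A2 c) L x ∧
      L (EuclideanSpace.single 2 1) = E2v c x := by
  have hr := (Rf_pos h (c := c)).ne'
  have hn := (Nf_pos h (c := c)).ne'
  have hA : A2 c = fun y => Real.log (Nf c y) - c * (Rf c y)⁻¹ := by
    funext y; rw [A2, div_eq_mul_inv]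
  have hinvR := (hasDerivAt_inv hr).comp_hasFDerivAt x (hasF_R (c := c) h)
  simp only [Function.comp_def] at hinvR
  have hfull := ((hasF_N (c := c) h).log hn).sub (hinvR.const_mul c)
  replace hfull := hfull.congr_of_eventuallyEq (Filter.Eventually.of_forall fun y => congrFun hA y)
  refine ⟨_, hfull, ?_⟩
  simp only [DN, DR, Dq, pr, E2v, Nf, ContinuousLinearMap.add_apply,
    ContinuousLinearMap.coe_smul', Pi.smul_apply, ContinuousLinearMap.sub_apply,
    PiLp.proj_apply, EuclideanSpace.single_apply, smul_eq_mul, Fin.reduceEq, reduceIte]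
  norm_num
  rw [Nf] at hn
  field_simp
  ring

lemma Ev_sum {c : ℝ} {x : E3} (h : 0 < (x 0) ^ 2 + (x 1) ^ 2) :
    E0v c x + E1v c x + E2v c x = 0 := by
  have hr := (Rf_pos h (c := c)).ne'
  have hn := (Nf_pos h (c := c)).ne'
  have hsq := Rf_sq h (c := c)
  rw [qf] at hsq
  have hx1 : (x 1) ^ 2 = Rf c x ^ 2 - (x 2 - c) ^ 2 - (x 0) ^ 2 := by linarith
  rw [Nf] at hn
  simp only [E0v, E1v, E2v, Nf]
  rw [hx1]
  field_simp
  ring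

lemma isOpenS : IsOpen {x : E3 | 0 < (x 0) ^ 2 + (x 1) ^ 2} := by
  have hc : Continuous fun x : E3 => (x 0) ^ 2 + (x 1) ^ 2 := by
    apply Continuous.add
    · exact ((continuous_apply (0 : Fin 3)).comp (PiLp.continuous_ofLp 2 _)).pow 2
    · exact ((continuous_apply (1 : Fin 3)).comp (PiLp.continuous_ofLp 2 _)).pow 2
  exact isOpen_lt continuous_const hc

lemma coord_contDiff (i : Fin 3) : ContDiff ℝ (⊤ : ℕ∞) (fun y : E3 => y i) :=
  (EuclideanSpace.proj i : E3 →L[ℝ] ℝ).contDiff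

lemma psi_contDiffAt {c : ℝ} {x : E3} (h : 0 < (x 0) ^ 2 + (x 1) ^ 2) :
    ContDiffAt ℝ (⊤ : ℕ∞) (psi c) x := by
  have hq : ContDiffAt ℝ (⊤ : ℕ∞) (qf c) x := by
    apply ContDiffAt.add
    apply ContDiffAt.add
    · exact (coord_contDiff 0).contDiffAt.pow 2
    · exact (coord_contDiff 1).contDiffAt.pow 2
    · exact (((coord_contDiff 2).contDiffAt.sub contDiffAt_const).pow 2)
  have hR : ContDiffAt ℝ (⊤ : ℕ∞) (Rf c) x :=
    (Real.contDiffAt_sqrt (qf_pos h).ne').comp x hq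
  have hN : ContDiffAt ℝ (⊤ : ℕ∞) (Nf c) x :=
    hR.sub ((coord_contDiff 2).contDiffAt.sub contDiffAt_const)
  exact ((coord_contDiff 2).contDiffAt.mul (hN.log (Nf_pos h).ne')).add hR

lemma fderiv_psi_val {c : ℝ} {y : E3} (hy : 0 < (y 0) ^ 2 + (y 1) ^ 2) :
    fderiv ℝ (psi c) y = Dpsi c y := (hasF_psi hy).fderiv

/-- **The manufactured solution of the second convergence test is harmonic off the
`z`-axis.** For `a < b`, the function
`u(x, y, z) = z ln((√(x² + y² + (z-b)²) - (z-b)) / (√(x² + y² + (z-a)²) - (z-a)))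
  + √(x² + y² + (z-b)²) - √(x² + y² + (z-a)²)`
is smooth on `{(x,y,z) : x² + y² > 0}` and its Laplacian vanishes there. -/
theorem manufactured_solution_segment_smooth_harmonic
    (a b : ℝ) (hab : a < b)
    (u : EuclideanSpace ℝ (Fin 3) → ℝ)
    (hu : ∀ x, u x =
      x 2 * Real.log
          ((Real.sqrt ((x 0) ^ 2 + (x 1) ^ 2 + (x 2 - b) ^ 2) - (x 2 - b)) /
            (Real.sqrt ((x 0) ^ 2 + (x 1) ^ 2 + (x 2 - a) ^ 2) - (x 2 - a))) +
        Real.sqrt ((x 0) ^ 2 + (x 1) ^ 2 + (x 2 - b) ^ 2) -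
        Real.sqrt ((x 0) ^ 2 + (x 1) ^ 2 + (x 2 - a) ^ 2)) :
    ContDiffOn ℝ (⊤ : ℕ∞) u {x : EuclideanSpace ℝ (Fin 3) | 0 < (x 0) ^ 2 + (x 1) ^ 2} ∧
    ∀ x : EuclideanSpace ℝ (Fin 3),
      0 < (x 0) ^ 2 + (x 1) ^ 2 → laplacian u x = 0 := by
  have hue : ∀ y : E3, 0 < (y 0) ^ 2 + (y 1) ^ 2 → u y = psi b y - psi a y := by
    intro y hy
    have hnb := (Nf_pos hy (c := b)).ne'
    have hna := (Nf_pos hy (c := a)).ne'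
    simp only [Nf, Rf, qf] at hnb hna
    rw [hu y]
    simp only [psi, Nf, Rf, qf]
    rw [Real.log_div hnb hna]
    ring
  constructor
  · have hcd : ContDiffOn ℝ (⊤ : ℕ∞) (fun y => psi b y - psi a y)
        {x : E3 | 0 < (x 0) ^ 2 + (x 1) ^ 2} :=
      fun y hy => ((psi_contDiffAt hy).sub (psi_contDiffAt hy)).contDiffWithinAt
    exact hcd.congr fun y hy => hue y hy
  · intro x hx
    obtain ⟨L0b, h0b, v0b⟩ := secondA0 (c := b) hx
    obtain ⟨L0a, h0a, v0a⟩ := secondA0 (c := a) hx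
    obtain ⟨L1b, h1b, v1b⟩ := secondA1 (c := b) hx
    obtain ⟨L1a, h1a, v1a⟩ := secondA1 (c := a) hx
    obtain ⟨L2b, h2b, v2b⟩ := secondA2 (c := b) hx
    obtain ⟨L2a, h2a, v2a⟩ := secondA2 (c := a) hx
    have hfu : ∀ y : E3, 0 < (y 0) ^ 2 + (y 1) ^ 2 →
        fderiv ℝ u y = Dpsi b y - Dpsi a y := by
      intro y hy
      have h1 : HasFDerivAt (fun z => psi b z - psi a z) (Dpsi b y - Dpsi a y) y :=
        (hasF_psi hy).sub (hasF_psi hy)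
      have heq : u =ᶠ[nhds y] fun z => psi b z - psi a z :=
        Filter.eventuallyEq_of_mem (isOpenS.mem_nhds hy) fun z hz => hue z hz
      exact (h1.congr_of_eventuallyEq heq).fderiv
    have memS := isOpenS.mem_nhds hx
    have ev0 : (fun y => fderiv ℝ u y (EuclideanSpace.single 0 1)) =ᶠ[nhds x]
        fun y => A0 b y - A0 a y :=
      Filter.eventuallyEq_of_mem memS fun y hy => by
        rw [hfu y hy, ContinuousLinearMap.sub_apply, Dpsi_e0 hy, Dpsi_e0 hy]
    have ev1 : (fun y => fderiv ℝ u y (EuclideanSpace.single 1 1)) =ᶠ[nhds x]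
        fun y => A1 b y - A1 a y :=
      Filter.eventuallyEq_of_mem memS fun y hy => by
        rw [hfu y hy, ContinuousLinearMap.sub_apply, Dpsi_e1 hy, Dpsi_e1 hy]
    have ev2 : (fun y => fderiv ℝ u y (EuclideanSpace.single 2 1)) =ᶠ[nhds x]
        fun y => A2 b y - A2 a y :=
      Filter.eventuallyEq_of_mem memS fun y hy => by
        rw [hfu y hy, ContinuousLinearMap.sub_apply, Dpsi_e2 hy, Dpsi_e2 hy]
    have H0 : HasFDerivAt (fun y => fderiv ℝ u y (EuclideanSpace.single 0 1))
        (L0b - L0a) x := (h0b.sub h0a).congr_of_eventuallyEq ev0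
    have H1 : HasFDerivAt (fun y => fderiv ℝ u y (EuclideanSpace.single 1 1))
        (L1b - L1a) x := (h1b.sub h1a).congr_of_eventuallyEq ev1
    have H2 : HasFDerivAt (fun y => fderiv ℝ u y (EuclideanSpace.single 2 1))
        (L2b - L2a) x := (h2b.sub h2a).congr_of_eventuallyEq ev2
    have hsb := Ev_sum (c := b) hx
    have hsa := Ev_sum (c := a) hx
    unfold laplacian
    rw [Fin.sum_univ_three, H0.fderiv, H1.fderiv, H2.fderiv]
    simp only [ContinuousLinearMap.sub_apply]
    rw [v0b, v0a, v1b, v1a, v2b, v2a]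
    linarith
end
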